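/- arXiv:math/0503645 — 12 statements merged into one kernel-verified Lean document; each statement's English description precedes it below -/
import Mathlib

section
/- Let m ≥ 1 and let M be a real symmetric m×m matrix such that (1) every column sum vanishes: Σ_{i=1}^m M_{ij} = 0 for every 1 ≤ j ≤ m, and (2) M_{ij} + M_{(i+1)(j+1)} − M_{i(j+1)} − M_{(i+1)j} = 0 for all 1 ≤ i, j ≤ m−1. Then M = 0. -/
/-!
Vanishing second differences make `M` additively separable, `M i j = a i + b j`. Vanishing column
sums force `b` to be constant, so every row of `M` is constant; by symmetry so is every column,
hence `M` is a constant matrix, and a constant matrix with zero column sums is zero.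
-/

theorem Fin.apply_eq_apply_zero_of_apply_succ_eq_apply_castSucc {α : Type*} {n : ℕ}
    {f : Fin (n + 1) → α} (hf : ∀ i : Fin n, f i.succ = f i.castSucc) (i : Fin (n + 1)) :
    f i = f 0 :=
  Fin.induction rfl (fun i hi => (hf i).trans hi) i

namespace Matrix

variable {α : Type*} [AddCommGroup α]

theorem eq_add_sub_of_second_difference_eq_zero {p q : ℕ}
    {M : Matrix (Fin (p + 1)) (Fin (q + 1)) α}
    (h : ∀ (i : Fin p) (j : Fin q),
      M i.castSucc j.castSucc + M i.succ j.succ - M i.castSucc j.succ - M i.succ j.castSucc = 0)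
    (i : Fin (p + 1)) (j : Fin (q + 1)) :
    M i j = M i 0 + M 0 j - M 0 0 := by
  have row_diff (i : Fin p) (j : Fin (q + 1)) :
      M i.succ j - M i.castSucc j = M i.succ 0 - M i.castSucc 0 :=
    Fin.apply_eq_apply_zero_of_apply_succ_eq_apply_castSucc
      (f := fun j => M i.succ j - M i.castSucc j)
      (fun j => by rw [← sub_eq_zero, ← h i j]; abel) j
  have col_diff : M i j - M i 0 = M 0 j - M 0 0 :=
    Fin.apply_eq_apply_zero_of_apply_succ_eq_apply_castSucc
      (f := fun i => M i j - M i 0)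
      (fun i => sub_eq_sub_iff_sub_eq_sub.mpr (row_diff i j)) i
  rw [add_sub_assoc, ← col_diff]
  abel

theorem apply_eq_of_eq_add_of_sum_eq_zero [IsAddTorsionFree α] {ι : Type*} [Fintype ι]
    {M : Matrix ι ι α} {a b : ι → α} (hM : ∀ i j, M i j = a i + b j)
    (hcol : ∀ j, ∑ i, M i j = 0) (j k : ι) : b j = b k := by
  have : Nonempty ι := ⟨j⟩
  have hsum (j : ι) : ∑ i, M i j = ∑ i, a i + Fintype.card ι • b j := by
    simp only [hM, Finset.sum_add_distrib, Finset.sum_const, Finset.card_univ]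
  apply IsAddTorsionFree.nsmul_right_injective (Fintype.card_ne_zero (α := ι))
  have hj := hsum j
  have hk := hsum k
  rw [hcol] at hj hk
  exact add_left_cancel (hj.symm.trans hk)

end Matrix

theorem traceless_matrix_zero_general (m : ℕ) (M : Matrix (Fin m) (Fin m) ℝ)
    (hsym : ∀ i j : Fin m, M i j = M j i)
    (hcol : ∀ j : Fin m, ∑ i, M i j = 0)
    (hdiff : ∀ (i j : Fin m) (hi : i.1 + 1 < m) (hj : j.1 + 1 < m),
      M i j + M ⟨i.1 + 1, hi⟩ ⟨j.1 + 1, hj⟩ - M i ⟨j.1 + 1, hj⟩ - M ⟨i.1 + 1, hi⟩ j = 0) :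
    M = 0 := by
  cases m with
  | zero => exact Subsingleton.elim _ _
  | succ n =>
    have hsep := Matrix.eq_add_sub_of_second_difference_eq_zero
      (fun i j => hdiff i.castSucc j.castSucc (by simp) (by simp))
    have hrow (j : Fin (n + 1)) : M 0 j = M 0 0 :=
      Matrix.apply_eq_of_eq_add_of_sum_eq_zero (a := fun i => M i 0 - M 0 0)
        (fun i j => by rw [hsep i j]; abel) hcol j 0
    have hconst (i j : Fin (n + 1)) : M i j = M 0 0 := by
      rw [hsep, hsym i 0, hrow i, hrow j]
      abel
    have hzero : M 0 0 = 0 := by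
      simpa [hconst, Nat.cast_add_one_ne_zero] using hcol 0
    ext i j
    rw [hconst, hzero, Matrix.zero_apply]

/-- Lemma 4.1: a real symmetric `m × m` matrix whose column sums all vanish and whose
second differences `M_{ij} + M_{(i+1)(j+1)} - M_{i(j+1)} - M_{(i+1)j}` all vanish is zero. -/
theorem traceless_matrix_zero (m : ℕ) (hm : 1 ≤ m) (M : Matrix (Fin m) (Fin m) ℝ)
    (hsym : ∀ i j : Fin m, M i j = M j i)
    (hcol : ∀ j : Fin m, ∑ i, M i j = 0)
    (hdiff : ∀ (i j : Fin m) (hi : i.1 + 1 < m) (hj : j.1 + 1 < m),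
      M i j + M ⟨i.1 + 1, hi⟩ ⟨j.1 + 1, hj⟩ - M i ⟨j.1 + 1, hj⟩ - M ⟨i.1 + 1, hi⟩ j = 0) :
    M = 0 :=
  traceless_matrix_zero_general m M hsym hcol hdiff
end

section
/- Let m ≥ 1, let M be a real symmetric positive-semidefinite m×m matrix, and let C(q,α,γ) ∈ ℝ for all indices 1 ≤ q, α, γ ≤ m be arbitrary real numbers. Define the matrix M# by M#_{qp} := Σ_{α,β,γ,δ} C(q,α,γ)·C(p,β,δ)·M_{αβ}·M_{γδ}. Then M# is a real symmetric positive-semidefinite m×m matrix. -/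
open Matrix Kronecker

/-!
Flattening the index pairs `(α, γ)` turns `C` into an `m × m²` matrix `N`, and then
`M# = N (M ⊗ M) Nᵀ`. The Kronecker product of positive semidefinite matrices is positive
semidefinite, and so is any congruence `N A Nᵀ` of a positive semidefinite `A`.
-/

namespace Matrix

variable {n ι R : Type*} [Fintype ι] [CommSemiring R]

def flattenPairs (C : n → ι → ι → R) : Matrix n (ι × ι) R :=
  of fun q a => C q a.1 a.2

theorem of_sum_mul_mul_mul_eq_flattenPairs_mul_kronecker_mul_transpose
    (C : n → ι → ι → R) (M : Matrix ι ι R) :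
    of (fun q p => ∑ α, ∑ β, ∑ γ, ∑ δ, C q α γ * C p β δ * M α β * M γ δ) =
      flattenPairs C * (M ⊗ₖ M) * (flattenPairs C)ᵀ := by
  ext q p
  simp only [of_apply, mul_apply, transpose_apply, kroneckerMap_apply, flattenPairs,
    Fintype.sum_prod_type, Finset.sum_mul]
  rw [Finset.sum_comm]
  refine Finset.sum_congr rfl fun β _ => ?_
  rw [Finset.sum_congr rfl fun α _ => Finset.sum_comm, Finset.sum_comm]
  refine Finset.sum_congr rfl fun δ _ => ?_
  refine Finset.sum_congr rfl fun α _ => Finset.sum_congr rfl fun γ _ => ?_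
  ring

end Matrix

theorem sharp_posSemidef_general (m : ℕ) (M : Matrix (Fin m) (Fin m) ℝ)
    (hM : M.PosSemidef) (C : Fin m → Fin m → Fin m → ℝ) :
    Matrix.PosSemidef (Matrix.of fun q p : Fin m =>
      ∑ α, ∑ β, ∑ γ, ∑ δ, C q α γ * C p β δ * M α β * M γ δ) := by
  rw [of_sum_mul_mul_mul_eq_flattenPairs_mul_kronecker_mul_transpose,
    ← conjTranspose_eq_transpose_of_trivial]
  exact (hM.kronecker hM).mul_mul_conjTranspose_same _

/-- Lemma 5.2: if `M` is a real symmetric positive semidefinite `m × m` matrix and the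
structure constants `C(q,α,γ)` are real, then the matrix
`M#_{qp} = Σ C(q,α,γ)·C(p,β,δ)·M_{αβ}·M_{γδ}` is symmetric positive semidefinite. -/
theorem sharp_posSemidef (m : ℕ) (hm : 1 ≤ m) (M : Matrix (Fin m) (Fin m) ℝ)
    (hM : M.PosSemidef) (C : Fin m → Fin m → Fin m → ℝ) :
    Matrix.PosSemidef (Matrix.of fun q p : Fin m =>
      ∑ α, ∑ β, ∑ γ, ∑ δ, C q α γ * C p β δ * M α β * M γ δ) :=
  sharp_posSemidef_general m M hM C
end

section
/- Let n ≥ 2 and let R be a Kähler curvature-type tensor on ℂ^n whose traceless bisectional curvature operator is 2-nonnegative. Then the orthogonal bisectional curvature of R is nonnegative: for all vectors v, w ∈ ℂ^n with Σ_i v_i·conj(w_i) = 0, the number Σ_{i,j,k,l} R(i,j,k,l)·v_i·conj(v_j)·w_k·conj(w_l) is a nonnegative real number. In particular Re(R(i,i,j,j)) ≥ 0 for all i ≠ j. -/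
open BigOperators

/-- A Kähler curvature-type tensor on `ℂ^n`: `R i j k l` stands for `R_{i j̄ k l̄}` in a
unitary frame, with the symmetries `R_{i j̄ k l̄} = R_{k j̄ i l̄}`, `R_{i j̄ k l̄} = R_{i l̄ k j̄}`
and the reality condition `conj R_{i j̄ k l̄} = R_{j ī l k̄}`. -/
def IsKahlerCurvTensor {n : ℕ} (R : Fin n → Fin n → Fin n → Fin n → ℂ) : Prop :=
  (∀ i j k l, R i j k l = R k j i l) ∧
  (∀ i j k l, R i j k l = R i l k j) ∧
  (∀ i j k l, starRingEnd ℂ (R i j k l) = R j i l k)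

/-- The Ricci tensor `Ric(i,j) = Σ_k R(i,j,k,k)` of a curvature-type tensor. -/
noncomputable def ricci {n : ℕ} (R : Fin n → Fin n → Fin n → Fin n → ℂ) (i j : Fin n) : ℂ :=
  ∑ k, R i j k k

/-- The scalar curvature `r = Σ_i Re(Ric(i,i))` of a curvature-type tensor. -/
noncomputable def scalarCurv {n : ℕ} (R : Fin n → Fin n → Fin n → Fin n → ℂ) : ℝ :=
  ∑ i, (ricci R i i).re

/-- `η` belongs to `H₀`, the real vector space of trace-free Hermitian `n × n` matrices
(identified with traceless real `(1,1)`-forms). -/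
def MemH0 {n : ℕ} (η : Matrix (Fin n) (Fin n) ℂ) : Prop :=
  η.IsHermitian ∧ η.trace = 0

/-- The inner product `⟨η,τ⟩ = Re Tr(ητ)` on Hermitian matrices. -/
noncomputable def h0Inner {n : ℕ} (η τ : Matrix (Fin n) (Fin n) ℂ) : ℝ :=
  (Matrix.trace (η * τ)).re

/-- The (real-valued) symmetric bilinear form `ℛ(η,τ) = Σ R(i,j,k,l)·η(j,i)·τ(l,k)`
induced by a curvature-type tensor on Hermitian matrices. -/
noncomputable def curvForm {n : ℕ} (R : Fin n → Fin n → Fin n → Fin n → ℂ)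
    (η τ : Matrix (Fin n) (Fin n) ℂ) : ℝ :=
  (∑ i, ∑ j, ∑ k, ∑ l, R i j k l * η j i * τ l k).re

/-- The traceless bisectional curvature operator of `R` is nonnegative:
`ℛ(η,η) ≥ 0` for every `η ∈ H₀`. -/
def NonnegTBC {n : ℕ} (R : Fin n → Fin n → Fin n → Fin n → ℂ) : Prop :=
  ∀ η : Matrix (Fin n) (Fin n) ℂ, MemH0 η → 0 ≤ curvForm R η η

/-- The traceless bisectional curvature operator of `R` is 2-nonnegative:
`ℛ(η,η) + ℛ(τ,τ) ≥ 0` for all orthonormal pairs `η, τ ∈ H₀`. -/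
def TwoNonnegTBC {n : ℕ} (R : Fin n → Fin n → Fin n → Fin n → ℂ) : Prop :=
  ∀ η τ : Matrix (Fin n) (Fin n) ℂ, MemH0 η → MemH0 τ →
    h0Inner η η = 1 → h0Inner τ τ = 1 → h0Inner η τ = 0 →
    0 ≤ curvForm R η η + curvForm R τ τ

open ComplexConjugate

lemma sum4_prod {n : ℕ} (f : Fin n → Fin n → Fin n → Fin n → ℂ) :
    (∑ i, ∑ j, ∑ k, ∑ l, f i j k l)
      = ∑ p : Fin n × Fin n × Fin n × Fin n, f p.1 p.2.1 p.2.2.1 p.2.2.2 := by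
  simp only [Fintype.sum_prod_type]

lemma sum4_swap13 {n : ℕ} (f : Fin n → Fin n → Fin n → Fin n → ℂ) :
    (∑ i, ∑ j, ∑ k, ∑ l, f i j k l) = ∑ i, ∑ j, ∑ k, ∑ l, f k j i l := by
  rw [sum4_prod f, sum4_prod (fun i j k l => f k j i l)]
  exact Fintype.sum_equiv ⟨fun p => (p.2.2.1, p.2.1, p.1, p.2.2.2),
    fun p => (p.2.2.1, p.2.1, p.1, p.2.2.2), fun p => rfl, fun p => rfl⟩ _ _ (fun p => rfl)

lemma sum4_swap24 {n : ℕ} (f : Fin n → Fin n → Fin n → Fin n → ℂ) :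
    (∑ i, ∑ j, ∑ k, ∑ l, f i j k l) = ∑ i, ∑ j, ∑ k, ∑ l, f i l k j := by
  rw [sum4_prod f, sum4_prod (fun i j k l => f i l k j)]
  exact Fintype.sum_equiv ⟨fun p => (p.1, p.2.2.2, p.2.2.1, p.2.1),
    fun p => (p.1, p.2.2.2, p.2.2.1, p.2.1), fun p => rfl, fun p => rfl⟩ _ _ (fun p => rfl)

lemma sum4_swap1234 {n : ℕ} (f : Fin n → Fin n → Fin n → Fin n → ℂ) :
    (∑ i, ∑ j, ∑ k, ∑ l, f i j k l) = ∑ i, ∑ j, ∑ k, ∑ l, f j i l k := by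
  rw [sum4_prod f, sum4_prod (fun i j k l => f j i l k)]
  exact Fintype.sum_equiv ⟨fun p => (p.2.1, p.1, p.2.2.2, p.2.2.1),
    fun p => (p.2.1, p.1, p.2.2.2, p.2.2.1), fun p => rfl, fun p => rfl⟩ _ _ (fun p => rfl)

lemma sum2_expand {n : ℕ} (F : Fin n → Fin n → ℂ) (f₁ g₁ f₂ g₂ f₃ g₃ f₄ g₄ : Fin n → ℂ)
    (h : ∀ a b, F a b = f₁ a * g₁ b + f₂ a * g₂ b + f₃ a * g₃ b + f₄ a * g₄ b) :
    (∑ a, ∑ b, F a b) =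
      (∑ a, f₁ a) * (∑ b, g₁ b) + (∑ a, f₂ a) * (∑ b, g₂ b) +
      (∑ a, f₃ a) * (∑ b, g₃ b) + (∑ a, f₄ a) * (∑ b, g₄ b) := by
  simp only [h, Finset.sum_add_distrib, Finset.sum_mul, Finset.mul_sum]
  congr 1
  · congr 1
    · congr 1 <;> exact Finset.sum_comm
    · exact Finset.sum_comm
  · exact Finset.sum_comm

lemma h0Inner_eq {n : ℕ} (η τ : Matrix (Fin n) (Fin n) ℂ) :
    (Matrix.trace (η * τ)).re = (∑ a, ∑ b, η a b * τ b a).re := by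
  simp [Matrix.trace, Matrix.mul_apply, Matrix.diag]


lemma main_re {n : ℕ} (R : Fin n → Fin n → Fin n → Fin n → ℂ)
    (hR : IsKahlerCurvTensor R) (h2 : TwoNonnegTBC R)
    (v w : Fin n → ℂ) (hvw : (∑ i, v i * conj (w i)) = 0) :
    0 ≤ (∑ i, ∑ j, ∑ k, ∑ l,
          R i j k l * v i * conj (v j) * w k * conj (w l)).re := by
  by_cases hv0 : v = 0
  · simp [hv0]
  by_cases hw0 : w = 0
  · simp [hw0]
  -- basic orthogonality facts
  have hA2 : (∑ a, conj (w a) * v a) = 0 := by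
    rw [← hvw]; exact Finset.sum_congr rfl fun a _ => mul_comm _ _
  have hA1 : (∑ a, conj (v a) * w a) = 0 := by
    have := congrArg (starRingEnd ℂ) hvw
    simpa [map_sum, map_mul, mul_comm] using this
  set α : ℝ := ∑ a, Complex.normSq (v a) with hα
  set β : ℝ := ∑ a, Complex.normSq (w a) with hβ
  have hαpos : 0 < α := by
    obtain ⟨a, ha⟩ := Function.ne_iff.mp hv0
    exact Finset.sum_pos' (fun b _ => Complex.normSq_nonneg _)
      ⟨a, Finset.mem_univ a, Complex.normSq_pos.mpr ha⟩
  have hβpos : 0 < β := by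
    obtain ⟨a, ha⟩ := Function.ne_iff.mp hw0
    exact Finset.sum_pos' (fun b _ => Complex.normSq_nonneg _)
      ⟨a, Finset.mem_univ a, Complex.normSq_pos.mpr ha⟩
  have hAv : (∑ a, conj (v a) * v a) = (α : ℂ) := by
    rw [hα]; push_cast; exact Finset.sum_congr rfl fun a _ => by
      rw [Complex.normSq_eq_conj_mul_self]
  have hAv' : (∑ a, v a * conj (v a)) = (α : ℂ) := by
    rw [← hAv]; exact Finset.sum_congr rfl fun a _ => mul_comm _ _
  have hAw : (∑ a, conj (w a) * w a) = (β : ℂ) := by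
    rw [hβ]; push_cast; exact Finset.sum_congr rfl fun a _ => by
      rw [Complex.normSq_eq_conj_mul_self]
  have hAw' : (∑ a, w a * conj (w a)) = (β : ℂ) := by
    rw [← hAw]; exact Finset.sum_congr rfl fun a _ => mul_comm _ _
  set s : ℝ := (Real.sqrt (2 * α * β))⁻¹ with hs
  have hxpos : (0:ℝ) < 2 * α * β := by positivity
  have hspos : 0 < s := by rw [hs]; positivity
  have hs2 : s ^ 2 * (2 * α * β) = 1 := by
    rw [hs, ← Real.sqrt_inv, Real.sq_sqrt (by positivity)]
    field_simp
  set η : Matrix (Fin n) (Fin n) ℂ :=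
    Matrix.of (fun a b => (s:ℂ) * (conj (v a) * w b + conj (w a) * v b)) with hηdef
  set τ : Matrix (Fin n) (Fin n) ℂ :=
    Matrix.of (fun a b => (s:ℂ) * Complex.I * (conj (v a) * w b - conj (w a) * v b)) with hτdef
  have hηe : ∀ a b, η a b = (s:ℂ) * (conj (v a) * w b + conj (w a) * v b) := fun a b => rfl
  have hτe : ∀ a b, τ a b = (s:ℂ) * Complex.I * (conj (v a) * w b - conj (w a) * v b) :=
    fun a b => rfl
  have hmemη : MemH0 η := by
    constructor
    · ext a b
      simp only [Matrix.conjTranspose_apply, hηe, RCLike.star_def, map_mul, map_add,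
        Complex.conj_conj, Complex.conj_ofReal]
      ring
    · simp only [Matrix.trace, Matrix.diag, hηe, mul_add, Finset.sum_add_distrib,
        ← Finset.mul_sum, hA1, hA2, mul_zero, add_zero]
  have hmemτ : MemH0 τ := by
    constructor
    · ext a b
      simp only [Matrix.conjTranspose_apply, hτe, RCLike.star_def, map_mul, map_sub,
        Complex.conj_conj, Complex.conj_ofReal, Complex.conj_I]
      ring
    · simp only [Matrix.trace, Matrix.diag, hτe, mul_sub, Finset.sum_sub_distrib,
        ← Finset.mul_sum, hA1, hA2, mul_zero, sub_zero]
  have hIηη : h0Inner η η = 1 := by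
    have key : (∑ a, ∑ b, η a b * η b a) = ((2*s^2*α*β : ℝ) : ℂ) := by
      rw [sum2_expand (fun a b => η a b * η b a)
        (fun a => (s:ℂ)^2 * (conj (v a) * w a)) (fun b => conj (v b) * w b)
        (fun a => (s:ℂ)^2 * (conj (v a) * v a)) (fun b => w b * conj (w b))
        (fun a => (s:ℂ)^2 * (conj (w a) * w a)) (fun b => v b * conj (v b))
        (fun a => (s:ℂ)^2 * (conj (w a) * v a)) (fun b => conj (w b) * v b)
        (fun a b => by simp only [hηe]; ring)]
      simp only [← Finset.mul_sum, hA1, hA2, hAv, hAv', hAw, hAw']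
      push_cast; ring
    rw [h0Inner, h0Inner_eq, key, Complex.ofReal_re]; nlinarith [hs2]
  have hIττ : h0Inner τ τ = 1 := by
    have key : (∑ a, ∑ b, τ a b * τ b a) = ((2*s^2*α*β : ℝ) : ℂ) := by
      rw [sum2_expand (fun a b => τ a b * τ b a)
        (fun a => -((s:ℂ)^2 * (conj (v a) * w a))) (fun b => conj (v b) * w b)
        (fun a => (s:ℂ)^2 * (conj (v a) * v a)) (fun b => w b * conj (w b))
        (fun a => (s:ℂ)^2 * (conj (w a) * w a)) (fun b => v b * conj (v b))
        (fun a => -((s:ℂ)^2 * (conj (w a) * v a))) (fun b => conj (w b) * v b)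
        (fun a b => by
          simp only [hτe]
          linear_combination ((s:ℂ)^2 * (conj (v a) * w b - conj (w a) * v b) *
            (conj (v b) * w a - conj (w b) * v a)) * Complex.I_sq)]
      simp only [← Finset.mul_sum, Finset.sum_neg_distrib, hA1, hA2, hAv, hAv', hAw, hAw']
      push_cast; ring
    rw [h0Inner, h0Inner_eq, key, Complex.ofReal_re]; nlinarith [hs2]
  have hIητ : h0Inner η τ = 0 := by
    have key : (∑ a, ∑ b, η a b * τ b a) = 0 := by
      rw [sum2_expand (fun a b => η a b * τ b a)
        (fun a => (s:ℂ)^2 * Complex.I * (conj (v a) * w a)) (fun b => conj (v b) * w b)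
        (fun a => -((s:ℂ)^2 * Complex.I * (conj (v a) * v a))) (fun b => w b * conj (w b))
        (fun a => (s:ℂ)^2 * Complex.I * (conj (w a) * w a)) (fun b => v b * conj (v b))
        (fun a => -((s:ℂ)^2 * Complex.I * (conj (w a) * v a))) (fun b => conj (w b) * v b)
        (fun a b => by simp only [hηe, hτe]; ring)]
      simp only [← Finset.mul_sum, Finset.sum_neg_distrib, hA1, hA2, hAv, hAv', hAw, hAw']
      ring
    rw [h0Inner, h0Inner_eq, key, Complex.zero_re]
  -- the curvature identity
  set S : ℂ := ∑ i, ∑ j, ∑ k, ∑ l, R i j k l * v i * conj (v j) * w k * conj (w l) with hS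
  have hT₁ : (∑ i, ∑ j, ∑ k, ∑ l, R i j k l * (conj (v j) * w i * (conj (w l) * v k))) = S := by
    rw [sum4_swap13 (fun i j k l => R i j k l * (conj (v j) * w i * (conj (w l) * v k))), hS]
    refine Finset.sum_congr rfl fun i _ => Finset.sum_congr rfl fun j _ =>
      Finset.sum_congr rfl fun k _ => Finset.sum_congr rfl fun l _ => ?_
    rw [hR.1 k j i l]; ring
  have hT₂ : (∑ i, ∑ j, ∑ k, ∑ l, R i j k l * (conj (w j) * v i * (conj (v l) * w k))) = S := by
    rw [sum4_swap24 (fun i j k l => R i j k l * (conj (w j) * v i * (conj (v l) * w k))), hS]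
    refine Finset.sum_congr rfl fun i _ => Finset.sum_congr rfl fun j _ =>
      Finset.sum_congr rfl fun k _ => Finset.sum_congr rfl fun l _ => ?_
    rw [hR.2.1 i l k j]; ring
  have hforms : curvForm R η η + curvForm R τ τ = (2 * s^2) * (2 * S.re) := by
    have hsum : (∑ i, ∑ j, ∑ k, ∑ l,
          (R i j k l * η j i * η l k + R i j k l * τ j i * τ l k))
        = 2 * (s:ℂ)^2 * S + 2 * (s:ℂ)^2 * S := by
      have step : ∀ i j k l : Fin n,
          R i j k l * η j i * η l k + R i j k l * τ j i * τ l k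
          = 2*(s:ℂ)^2 * (R i j k l * (conj (v j) * w i * (conj (w l) * v k)))
            + 2*(s:ℂ)^2 * (R i j k l * (conj (w j) * v i * (conj (v l) * w k))) := by
        intro i j k l
        simp only [hηe, hτe]
        linear_combination ((s:ℂ)^2 * R i j k l * (conj (v j) * w i - conj (w j) * v i) *
          (conj (v l) * w k - conj (w l) * v k)) * Complex.I_sq
      simp only [step, Finset.sum_add_distrib, ← Finset.mul_sum, hT₁, hT₂]
    have : curvForm R η η + curvForm R τ τ
        = (∑ i, ∑ j, ∑ k, ∑ l,
            (R i j k l * η j i * η l k + R i j k l * τ j i * τ l k)).re := by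
      rw [curvForm, curvForm, ← Complex.add_re]
      congr 1
      simp only [Finset.sum_add_distrib]
    rw [this, hsum]
    have hc : (2 * (s:ℂ)^2) = ((2*s^2 : ℝ) : ℂ) := by push_cast; ring
    rw [hc, Complex.add_re, Complex.re_ofReal_mul]
    ring
  have h0 := h2 η τ hmemη hmemτ hIηη hIττ hIητ
  rw [hforms] at h0
  nlinarith [sq_nonneg s, hspos]

lemma main_im {n : ℕ} (R : Fin n → Fin n → Fin n → Fin n → ℂ)
    (hR : IsKahlerCurvTensor R) (v w : Fin n → ℂ) :
    (∑ i, ∑ j, ∑ k, ∑ l,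
          R i j k l * v i * conj (v j) * w k * conj (w l)).im = 0 := by
  apply Complex.conj_eq_iff_im.mp
  have h1 : conj (∑ i, ∑ j, ∑ k, ∑ l, R i j k l * v i * conj (v j) * w k * conj (w l))
      = ∑ i, ∑ j, ∑ k, ∑ l, R j i l k * conj (v i) * v j * conj (w k) * w l := by
    simp only [map_sum, map_mul, Complex.conj_conj, hR.2.2]
  rw [h1, sum4_swap1234 (fun i j k l => R j i l k * conj (v i) * v j * conj (w k) * w l)]
  exact Finset.sum_congr rfl fun i _ => Finset.sum_congr rfl fun j _ =>
    Finset.sum_congr rfl fun k _ => Finset.sum_congr rfl fun l _ => by ring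

/-- Theorem 1.2 / Proposition 3.3, first assertion: if the traceless bisectional curvature
operator is 2-nonnegative, then the orthogonal bisectional curvature is nonnegative:
for orthogonal `v, w` the number `Σ R(i,j,k,l)·v_i·conj(v_j)·w_k·conj(w_l)` is a
nonnegative real number; in particular `Re R(i,i,j,j) ≥ 0` for `i ≠ j`. -/
theorem orthogonal_bisectional_nonneg_of_twoNonnegTBC (n : ℕ) (hn : 2 ≤ n)
    (R : Fin n → Fin n → Fin n → Fin n → ℂ)
    (hR : IsKahlerCurvTensor R) (h2 : TwoNonnegTBC R) :
    (∀ v w : Fin n → ℂ, (∑ i, v i * starRingEnd ℂ (w i)) = 0 →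
      0 ≤ (∑ i, ∑ j, ∑ k, ∑ l,
            R i j k l * v i * starRingEnd ℂ (v j) * w k * starRingEnd ℂ (w l)).re ∧
      (∑ i, ∑ j, ∑ k, ∑ l,
            R i j k l * v i * starRingEnd ℂ (v j) * w k * starRingEnd ℂ (w l)).im = 0) ∧
    (∀ i j : Fin n, i ≠ j → 0 ≤ (R i i j j).re) := by
  refine ⟨fun v w hvw => ⟨main_re R hR h2 v w hvw, main_im R hR v w⟩, fun i j hij => ?_⟩
  set v : Fin n → ℂ := fun a => if a = i then 1 else 0 with hv
  set w : Fin n → ℂ := fun a => if a = j then 1 else 0 with hw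
  have horth : (∑ a, v a * conj (w a)) = 0 := by
    simp [hv, hw, apply_ite (starRingEnd ℂ), ite_mul, mul_ite, Finset.sum_ite_eq', hij, hij.symm]
  have h := main_re R hR h2 v w horth
  have hsum : (∑ a, ∑ b, ∑ c, ∑ d, R a b c d * v a * conj (v b) * w c * conj (w d))
      = R i i j j := by
    simp [hv, hw, apply_ite (starRingEnd ℂ), mul_ite, mul_one, mul_zero, ite_mul, zero_mul,
      Finset.sum_ite_eq', Finset.mem_univ, if_true]
  rwa [hsum] at h
end

section
/- Let n ≥ 2 and let R be a Kähler curvature-type tensor on ℂ^n whose traceless bisectional curvature operator is nonnegative. Then for all indices i ≠ j: Re(R(i,i,i,i)) + Re(R(j,j,j,j)) ≥ 2·Re(R(i,i,j,j)) ≥ 0. -/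
open BigOperators

/-!
Test `ℛ` on three traceless Hermitian matrices built from matrix units. On `E_ii - E_jj` it
equals `Re R_{iīiī} + Re R_{jj̄jj̄} - 2 Re R_{iījj̄}`. On `x E_ij + x̄ E_ji` it equals
`2 Re(R_{jīj ī} x²) + 2 |x|² Re R_{iījj̄}`, so the values at `x = 1` and `x = √-1` add up to
`4 Re R_{iījj̄}`.
-/

open Matrix

variable {n : ℕ}

lemma sum_mul_single_mul_single (f : Fin n → Fin n → Fin n → Fin n → ℂ) (p q r s : Fin n)
    (x y : ℂ) :
    ∑ a, ∑ b, ∑ c, ∑ d, f a b c d * single p q x b a * single r s y d c = f q p s r * x * y := by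
  simp [single, mul_ite, ite_mul, Finset.sum_ite_eq, ite_and]

lemma curvForm_single_add_single (R : Fin n → Fin n → Fin n → Fin n → ℂ) (p q r s : Fin n)
    (x y : ℂ) :
    curvForm R (single p q x + single r s y) (single p q x + single r s y) =
      (R q p q p * x * x + R q p s r * x * y + R s r q p * y * x + R s r s r * y * y).re := by
  simp only [curvForm, Matrix.add_apply, mul_add, add_mul, Finset.sum_add_distrib,
    sum_mul_single_mul_single]
  ring_nf

lemma memH0_single_add_single_neg (i j : Fin n) :
    MemH0 (single i i (1 : ℂ) + single j j (-1)) := by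
  refine ⟨?_, ?_⟩
  · simp [IsHermitian, conjTranspose_single]
  · simp [trace_single_eq_same]

lemma memH0_single_add_single_star {i j : Fin n} (hij : i ≠ j) (x : ℂ) :
    MemH0 (single i j x + single j i (star x)) := by
  refine ⟨?_, ?_⟩
  · simp [IsHermitian, conjTranspose_single, add_comm]
  · simp [trace_single_eq_of_ne _ _ _ hij, trace_single_eq_of_ne _ _ _ hij.symm]

namespace IsKahlerCurvTensor

variable {R : Fin n → Fin n → Fin n → Fin n → ℂ} (hR : IsKahlerCurvTensor R) (i j : Fin n)
include hR

lemma apply_jjii : R j j i i = R i i j j := by rw [hR.1 j j i i, hR.2.1 i j j i]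

lemma apply_jiij : R j i i j = R i i j j := hR.1 j i i j

lemma star_apply_iijj : star (R i i j j) = R i i j j := hR.2.2 i i j j

lemma apply_ijji : R i j j i = R i i j j := by
  rw [← hR.2.2 j i i j, hR.apply_jiij]; exact hR.star_apply_iijj i j

lemma apply_ijij : R i j i j = star (R j i j i) := (hR.2.2 j i j i).symm

lemma curvForm_single_add_single_neg :
    curvForm R (single i i 1 + single j j (-1)) (single i i 1 + single j j (-1)) =
      (R i i i i).re + (R j j j j).re - 2 * (R i i j j).re := by
  rw [curvForm_single_add_single, hR.apply_jjii i j]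
  simp only [mul_one, mul_neg, neg_neg, Complex.add_re, Complex.neg_re]
  ring

lemma curvForm_single_add_single_star (x : ℂ) :
    curvForm R (single i j x + single j i (star x)) (single i j x + single j i (star x)) =
      2 * (R j i j i * x ^ 2).re + 2 * Complex.normSq x * (R i i j j).re := by
  have hre : (R i i j j).im = 0 := Complex.conj_eq_iff_im.mp (hR.star_apply_iijj i j)
  rw [curvForm_single_add_single, hR.apply_jiij, hR.apply_ijji, hR.apply_ijij]
  simp only [Complex.add_re, Complex.mul_re, Complex.mul_im, Complex.star_def, Complex.conj_re,
    Complex.conj_im, Complex.normSq_apply, pow_two, hre]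
  ring

end IsKahlerCurvTensor

namespace NonnegTBC

variable {R : Fin n → Fin n → Fin n → Fin n → ℂ} (hpos : NonnegTBC R) (hR : IsKahlerCurvTensor R)
include hpos hR

lemma two_mul_re_le_add (i j : Fin n) :
    2 * (R i i j j).re ≤ (R i i i i).re + (R j j j j).re := by
  have h := hpos _ (memH0_single_add_single_neg i j)
  rw [hR.curvForm_single_add_single_neg] at h
  linarith

lemma re_apply_nonneg {i j : Fin n} (hij : i ≠ j) : 0 ≤ (R i i j j).re := by
  have h1 := hpos _ (memH0_single_add_single_star hij 1)
  have hI := hpos _ (memH0_single_add_single_star hij Complex.I)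
  rw [hR.curvForm_single_add_single_star] at h1 hI
  simp only [one_pow, mul_one, Complex.I_sq, mul_neg, Complex.neg_re, map_one,
    Complex.normSq_I] at h1 hI
  linarith

end NonnegTBC

theorem holSec_sum_ge_two_orth_of_nonnegTBC_general (n : ℕ)
    (R : Fin n → Fin n → Fin n → Fin n → ℂ)
    (hR : IsKahlerCurvTensor R) (hpos : NonnegTBC R) :
    ∀ i j : Fin n, i ≠ j →
      2 * (R i i j j).re ≤ (R i i i i).re + (R j j j j).re ∧ 0 ≤ 2 * (R i i j j).re :=
  fun i j hij => ⟨hpos.two_mul_re_le_add hR i j,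
    mul_nonneg zero_le_two (hpos.re_apply_nonneg hR hij)⟩

/-- Proposition 3.3, second assertion: if the traceless bisectional curvature operator is
nonnegative, then for `i ≠ j` one has
`Re R(i,i,i,i) + Re R(j,j,j,j) ≥ 2·Re R(i,i,j,j) ≥ 0`. -/
theorem holSec_sum_ge_two_orth_of_nonnegTBC (n : ℕ) (hn : 2 ≤ n)
    (R : Fin n → Fin n → Fin n → Fin n → ℂ)
    (hR : IsKahlerCurvTensor R) (hpos : NonnegTBC R) :
    ∀ i j : Fin n, i ≠ j →
      2 * (R i i j j).re ≤ (R i i i i).re + (R j j j j).re ∧ 0 ≤ 2 * (R i i j j).re :=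
  holSec_sum_ge_two_orth_of_nonnegTBC_general n R hR hpos
end

section
/- Let n ≥ 2 and let R be a Kähler curvature-type tensor on ℂ^n whose traceless bisectional curvature operator is nonnegative. Then the sum of any two eigenvalues of the Hermitian Ricci matrix Ric is nonnegative; equivalently, for any two vectors v, w ∈ ℂ^n with ‖v‖ = ‖w‖ = 1 and Σ_i v_i·conj(w_i) = 0, one has Re(Σ_{i,j} Ric(i,j)·v_i·conj(v_j)) + Re(Σ_{i,j} Ric(i,j)·w_i·conj(w_j)) ≥ 0. In particular Re(Ric(i,i)) + Re(Ric(j,j)) ≥ 0 for all i ≠ j. -/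
open BigOperators

/-!
Let `ℬ` be the complex-bilinear extension of `ℛ` and `P x = x x*`. For orthogonal `x, y` put
`A = x y*`: then `A + Aᴴ` and `i (A - Aᴴ)` lie in `H₀`, and their `ℛ`-values add up to
`4 Re ℬ(A, Aᴴ) = 4 Re ℬ(P x, P y)`, so bisectional curvatures of orthogonal pairs are
nonnegative. For orthonormal `x, y`, testing on `P x - P y ∈ H₀` also gives
`Re ℬ(P x, P x) + Re ℬ(P y, P y) ≥ 0`. Finally complete `x, y` to an orthonormal basis `(e_k)`:
since `Σ P e_k = 1`, the Ricci form at `x` is `Re ℬ(P x, 1) = Σ_k Re ℬ(P x, P e_k)`, in which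
every term but `Re ℬ(P x, P x)` is nonnegative.
-/

open Matrix ComplexConjugate

section

variable {n : ℕ} (R : Fin n → Fin n → Fin n → Fin n → ℂ)

noncomputable def curvBilin :
    Matrix (Fin n) (Fin n) ℂ →ₗ[ℂ] Matrix (Fin n) (Fin n) ℂ →ₗ[ℂ] ℂ :=
  LinearMap.mk₂ ℂ (fun η τ => ∑ i, ∑ j, ∑ k, ∑ l, R i j k l * η j i * τ l k)
    (fun _ _ _ => by simp only [Matrix.add_apply, mul_add, add_mul, Finset.sum_add_distrib])
    (fun _ _ _ => by
      simp only [Matrix.smul_apply, smul_eq_mul, Finset.mul_sum, mul_assoc, mul_left_comm])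
    (fun _ _ _ => by simp only [Matrix.add_apply, mul_add, Finset.sum_add_distrib])
    (fun _ _ _ => by
      simp only [Matrix.smul_apply, smul_eq_mul, Finset.mul_sum, mul_assoc, mul_left_comm])

lemma curvBilin_apply (η τ : Matrix (Fin n) (Fin n) ℂ) :
    curvBilin R η τ = ∑ i, ∑ j, ∑ k, ∑ l, R i j k l * η j i * τ l k := rfl

lemma curvForm_eq_re_curvBilin (η τ : Matrix (Fin n) (Fin n) ℂ) :
    curvForm R η τ = (curvBilin R η τ).re := rfl

variable {R}

lemma star_curvBilin (h : ∀ i j k l, conj (R i j k l) = R j i l k)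
    (η τ : Matrix (Fin n) (Fin n) ℂ) : star (curvBilin R η τ) = curvBilin R ηᴴ τᴴ := by
  simp only [curvBilin_apply, star_sum, star_mul', Complex.star_def, h, conjTranspose_apply]
  rw [Finset.sum_comm]
  refine Finset.sum_congr rfl fun j _ => Finset.sum_congr rfl fun i _ => Finset.sum_comm

lemma curvBilin_vecMulVec_swap (h : ∀ i j k l, R i j k l = R k j i l) (x y : Fin n → ℂ) :
    curvBilin R (vecMulVec x (star x)) (vecMulVec y (star y)) =
      curvBilin R (vecMulVec x (star y)) (vecMulVec y (star x)) := by
  simp only [curvBilin_apply, vecMulVec_apply, Pi.star_apply]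
  conv_lhs => rw [Finset.sum_comm]; enter [2, j]; rw [Finset.sum_comm]
  rw [Finset.sum_comm]
  refine Finset.sum_congr rfl fun i _ => Finset.sum_congr rfl fun j _ =>
    Finset.sum_congr rfl fun k _ => Finset.sum_congr rfl fun l _ => ?_
  rw [h]
  ring

lemma curvForm_add_conjTranspose_add_curvForm_I_smul_sub
    (h : ∀ i j k l, conj (R i j k l) = R j i l k) (A : Matrix (Fin n) (Fin n) ℂ) :
    curvForm R (A + Aᴴ) (A + Aᴴ) + curvForm R (Complex.I • (A - Aᴴ)) (Complex.I • (A - Aᴴ)) =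
      4 * (curvBilin R A Aᴴ).re := by
  have hconj : curvBilin R Aᴴ A = conj (curvBilin R A Aᴴ) := by
    rw [← Complex.star_def, star_curvBilin h, conjTranspose_conjTranspose]
  have hexpand : curvBilin R (A + Aᴴ) (A + Aᴴ) +
      curvBilin R (Complex.I • (A - Aᴴ)) (Complex.I • (A - Aᴴ)) =
        2 * (curvBilin R A Aᴴ + curvBilin R Aᴴ A) := by
    simp only [map_add, map_sub, map_smul, LinearMap.add_apply, LinearMap.sub_apply,
      LinearMap.smul_apply, smul_eq_mul]
    linear_combination (curvBilin R A A - curvBilin R A Aᴴ - curvBilin R Aᴴ A +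
      curvBilin R Aᴴ Aᴴ) * Complex.I_mul_I
  rw [curvForm_eq_re_curvBilin, curvForm_eq_re_curvBilin, ← Complex.add_re, hexpand, hconj,
    Complex.add_conj]
  norm_num [Complex.mul_re]
  ring

lemma memH0_add_conjTranspose {A : Matrix (Fin n) (Fin n) ℂ} (hA : A.trace = 0) :
    MemH0 (A + Aᴴ) :=
  ⟨isHermitian_add_transpose_self A, by simp [trace_add, trace_conjTranspose, hA]⟩

lemma memH0_I_smul_sub_conjTranspose {A : Matrix (Fin n) (Fin n) ℂ} (hA : A.trace = 0) :
    MemH0 (Complex.I • (A - Aᴴ)) := by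
  refine ⟨?_, by simp [trace_sub, trace_conjTranspose, hA]⟩
  simp [IsHermitian, conjTranspose_smul, conjTranspose_sub, ← smul_neg]

lemma re_curvBilin_conjTranspose_nonneg (h : ∀ i j k l, conj (R i j k l) = R j i l k)
    (hpos : NonnegTBC R) {A : Matrix (Fin n) (Fin n) ℂ} (hA : A.trace = 0) :
    0 ≤ (curvBilin R A Aᴴ).re := by
  have hsum := curvForm_add_conjTranspose_add_curvForm_I_smul_sub h A
  have hre := hpos _ (memH0_add_conjTranspose hA)
  have him := hpos _ (memH0_I_smul_sub_conjTranspose hA)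
  linarith

lemma re_curvBilin_vecMulVec_nonneg (hR : IsKahlerCurvTensor R) (hpos : NonnegTBC R)
    {x y : Fin n → ℂ} (hxy : x ⬝ᵥ star y = 0) :
    0 ≤ (curvBilin R (vecMulVec x (star x)) (vecMulVec y (star y))).re := by
  have := re_curvBilin_conjTranspose_nonneg hR.2.2 hpos (A := vecMulVec x (star y))
    (by rwa [trace_vecMulVec])
  rwa [conjTranspose_vecMulVec, star_star, ← curvBilin_vecMulVec_swap hR.1] at this

lemma re_curvBilin_vecMulVec_self_add_nonneg (hR : IsKahlerCurvTensor R) (hpos : NonnegTBC R)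
    {x y : Fin n → ℂ} (hxy : x ⬝ᵥ star y = 0) (hnorm : x ⬝ᵥ star x = y ⬝ᵥ star y) :
    0 ≤ (curvBilin R (vecMulVec x (star x)) (vecMulVec x (star x))).re +
      (curvBilin R (vecMulVec y (star y)) (vecMulVec y (star y))).re := by
  have hyx : y ⬝ᵥ star x = 0 := by rw [dotProduct_star, hxy, star_zero]
  have hdiff := hpos (vecMulVec x (star x) - vecMulVec y (star y))
    ⟨by simp [IsHermitian, conjTranspose_sub],
      by rw [trace_sub, trace_vecMulVec, trace_vecMulVec, hnorm, sub_self]⟩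
  rw [curvForm_eq_re_curvBilin] at hdiff
  simp only [map_sub, LinearMap.sub_apply, Complex.sub_re] at hdiff
  have hxy' := re_curvBilin_vecMulVec_nonneg hR hpos hxy
  have hyx' := re_curvBilin_vecMulVec_nonneg hR hpos hyx
  linarith

lemma curvBilin_vecMulVec_one (x : Fin n → ℂ) :
    curvBilin R (vecMulVec x (star x)) 1 = ∑ i, ∑ j, ricci R i j * star (x i) * x j := by
  simp only [curvBilin_apply, ricci, vecMulVec_apply, Pi.star_apply, one_apply, mul_ite, mul_one,
    mul_zero, Finset.sum_ite_eq', Finset.mem_univ, if_true, Finset.sum_mul]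
  refine Finset.sum_congr rfl fun i _ => Finset.sum_congr rfl fun j _ =>
    Finset.sum_congr rfl fun k _ => by ring

lemma sum_vecMulVec_orthonormalBasis {ι : Type*} [Fintype ι]
    (b : OrthonormalBasis ι ℂ (EuclideanSpace ℂ (Fin n))) :
    ∑ i, vecMulVec (b i) (star (b i)) = 1 := by
  have := congrArg
    (fun T : EuclideanSpace ℂ (Fin n) →L[ℂ] EuclideanSpace ℂ (Fin n) =>
      toEuclideanLin.symm T.toLinearMap) b.sum_rankOne_eq_id
  simp only [ContinuousLinearMap.toLinearMap_sum, map_sum,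
    InnerProductSpace.symm_toEuclideanLin_rankOne] at this
  rw [this]
  simp

section OrthonormalBasis

variable {ι : Type*} [Fintype ι] (b : OrthonormalBasis ι ℂ (EuclideanSpace ℂ (Fin n)))

lemma OrthonormalBasis.dotProduct_star_eq_zero {i j : ι} (hij : i ≠ j) :
    (b i).ofLp ⬝ᵥ star (b j).ofLp = 0 :=
  b.orthonormal.2 hij.symm

lemma OrthonormalBasis.dotProduct_star_self (i : ι) : (b i).ofLp ⬝ᵥ star (b i).ofLp = 1 := by
  rw [← EuclideanSpace.inner_eq_star_dotProduct, inner_self_eq_norm_sq_to_K, b.norm_eq_one]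
  simp

lemma re_curvBilin_self_le_re_curvBilin_one (hR : IsKahlerCurvTensor R) (hpos : NonnegTBC R)
    (i : ι) :
    (curvBilin R (vecMulVec (b i) (star (b i))) (vecMulVec (b i) (star (b i)))).re ≤
      (curvBilin R (vecMulVec (b i) (star (b i))) 1).re := by
  classical
  rw [← sum_vecMulVec_orthonormalBasis b, map_sum, Complex.re_sum,
    ← Finset.add_sum_erase _ _ (Finset.mem_univ i)]
  refine le_add_of_nonneg_right <| Finset.sum_nonneg fun k hk => ?_
  exact re_curvBilin_vecMulVec_nonneg hR hpos
    (b.dotProduct_star_eq_zero (Finset.ne_of_mem_erase hk).symm)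

lemma re_curvBilin_one_add_nonneg (hR : IsKahlerCurvTensor R) (hpos : NonnegTBC R)
    {i j : ι} (hij : i ≠ j) :
    0 ≤ (curvBilin R (vecMulVec (b i) (star (b i))) 1).re +
      (curvBilin R (vecMulVec (b j) (star (b j))) 1).re := by
  have hself := re_curvBilin_vecMulVec_self_add_nonneg hR hpos (b.dotProduct_star_eq_zero hij)
    (by rw [b.dotProduct_star_self, b.dotProduct_star_self])
  have hi := re_curvBilin_self_le_re_curvBilin_one b hR hpos i
  have hj := re_curvBilin_self_le_re_curvBilin_one b hR hpos j
  linarith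

end OrthonormalBasis

lemma Orthonormal.exists_orthonormalBasis_pair {𝕜 E : Type*} [RCLike 𝕜]
    [NormedAddCommGroup E] [InnerProductSpace 𝕜 E] [FiniteDimensional 𝕜 E] {x y : E}
    (h : Orthonormal 𝕜 ![x, y]) :
    ∃ (s : Finset E) (b : OrthonormalBasis s 𝕜 E) (i j : s), i ≠ j ∧ b i = x ∧ b j = y := by
  have hinj := h.linearIndependent.injective
  obtain ⟨s, b, hs, hb⟩ :=
    ((orthonormal_subtype_range hinj).mpr h).exists_orthonormalBasis_extension
  refine ⟨s, b, ⟨x, hs ⟨0, rfl⟩⟩, ⟨y, hs ⟨1, rfl⟩⟩, ?_, by simp [hb], by simp [hb]⟩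
  simpa using hinj.ne (show (0 : Fin 2) ≠ 1 by decide)

lemma orthonormal_toLp_star {v w : Fin n → ℂ} (hv : ∑ i, Complex.normSq (v i) = 1)
    (hw : ∑ i, Complex.normSq (w i) = 1) (hvw : ∑ i, v i * conj (w i) = 0) :
    Orthonormal ℂ ![WithLp.toLp 2 (star v), WithLp.toLp 2 (star w)] := by
  have hnormSq (u : Fin n → ℂ) : star u ⬝ᵥ u = ((∑ i, Complex.normSq (u i) : ℝ) : ℂ) := by
    simp [dotProduct, Complex.normSq_eq_conj_mul_self]
  have hwv : star w ⬝ᵥ v = 0 := by rw [dotProduct_comm]; exact hvw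
  have hvw' : star v ⬝ᵥ w = 0 := by rw [star_dotProduct, hwv, star_zero]
  rw [orthonormal_iff_ite]
  intro i j
  fin_cases i <;> fin_cases j <;>
    simp [-inner_self_eq_norm_sq_to_K, EuclideanSpace.inner_toLp_toLp, hnormSq, hv, hw, hwv,
      hvw']

end

theorem ricci_two_eigenvalues_nonneg_of_nonnegTBC_general (n : ℕ)
    (R : Fin n → Fin n → Fin n → Fin n → ℂ)
    (hR : IsKahlerCurvTensor R) (hpos : NonnegTBC R) :
    (∀ v w : Fin n → ℂ, (∑ i, Complex.normSq (v i)) = 1 → (∑ i, Complex.normSq (w i)) = 1 →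
      (∑ i, v i * starRingEnd ℂ (w i)) = 0 →
      0 ≤ (∑ i, ∑ j, ricci R i j * v i * starRingEnd ℂ (v j)).re +
          (∑ i, ∑ j, ricci R i j * w i * starRingEnd ℂ (w j)).re) ∧
    (∀ i j : Fin n, i ≠ j → 0 ≤ (ricci R i i).re + (ricci R j j).re) := by
  refine ⟨fun v w hv hw hvw => ?_, fun i j hij => ?_⟩
  · obtain ⟨s, b, i, j, hij, hi, hj⟩ :=
      (orthonormal_toLp_star hv hw hvw).exists_orthonormalBasis_pair
    have := re_curvBilin_one_add_nonneg b hR hpos hij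
    rw [hi, hj, curvBilin_vecMulVec_one, curvBilin_vecMulVec_one] at this
    simpa only [WithLp.ofLp_toLp, Pi.star_apply, star_star, Complex.star_def, Complex.conj_conj]
      using this
  · have := re_curvBilin_one_add_nonneg (EuclideanSpace.basisFun (Fin n) ℂ) hR hpos hij
    rw [curvBilin_vecMulVec_one, curvBilin_vecMulVec_one] at this
    simpa [Pi.single_apply] using this

/-- Proposition 3.3 / Theorem 1.2, last assertion: if the traceless bisectional curvature
operator is nonnegative, then the sum of any two eigenvalues of the Hermitian Ricci matrix
is nonnegative: for orthonormal `v, w` the sum of the Ricci form at `v` and at `w` is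
nonnegative; in particular `Re Ric(i,i) + Re Ric(j,j) ≥ 0` for `i ≠ j`. -/
theorem ricci_two_eigenvalues_nonneg_of_nonnegTBC (n : ℕ) (hn : 2 ≤ n)
    (R : Fin n → Fin n → Fin n → Fin n → ℂ)
    (hR : IsKahlerCurvTensor R) (hpos : NonnegTBC R) :
    (∀ v w : Fin n → ℂ, (∑ i, Complex.normSq (v i)) = 1 → (∑ i, Complex.normSq (w i)) = 1 →
      (∑ i, v i * starRingEnd ℂ (w i)) = 0 →
      0 ≤ (∑ i, ∑ j, ricci R i j * v i * starRingEnd ℂ (v j)).re +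
          (∑ i, ∑ j, ricci R i j * w i * starRingEnd ℂ (w j)).re) ∧
    (∀ i j : Fin n, i ≠ j → 0 ≤ (ricci R i i).re + (ricci R j j).re) :=
  ricci_two_eigenvalues_nonneg_of_nonnegTBC_general n R hR hpos
end

section
/- Let n ≥ 3 and let R be a Kähler curvature-type tensor on ℂ^n whose traceless bisectional curvature operator is 2-nonnegative. Then for all pairwise distinct indices i, j, k: Re(R(i,i,j,j)) + Re(R(i,i,k,k)) + Re(R(j,j,k,k)) ≤ Re(R(i,i,i,i)) + Re(R(j,j,j,j)) + Re(R(k,k,k,k)). -/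
open BigOperators

lemma curvForm_diag' {n : ℕ} (R : Fin n → Fin n → Fin n → Fin n → ℂ) (d d' : Fin n → ℂ) :
    curvForm R (Matrix.diagonal d) (Matrix.diagonal d')
      = (∑ p, ∑ q, R p p q q * d p * d' q).re := by
  unfold curvForm
  congr 1
  simp [Matrix.diagonal_apply, mul_ite, ite_mul, mul_zero, zero_mul,
    Finset.sum_ite_eq, Finset.sum_ite_eq']

lemma hermitian_aux {n : ℕ} (a b c : ℝ) (i j k : Fin n) :
    (Matrix.diagonal (fun p => (a:ℂ) * (if p = i then 1 else 0) + (b:ℂ) * (if p = j then 1 else 0)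
      + (c:ℂ) * (if p = k then 1 else 0))).IsHermitian := by
  have h : (star fun p : Fin n => (a:ℂ) * (if p = i then 1 else 0) + (b:ℂ) * (if p = j then 1 else 0)
        + (c:ℂ) * (if p = k then 1 else 0))
      = fun p : Fin n => (a:ℂ) * (if p = i then 1 else 0) + (b:ℂ) * (if p = j then 1 else 0)
        + (c:ℂ) * (if p = k then 1 else 0) := by
    funext p
    show starRingEnd ℂ _ = _
    rw [map_add, map_add, map_mul, map_mul, map_mul, Complex.conj_ofReal, Complex.conj_ofReal,
      Complex.conj_ofReal, apply_ite (starRingEnd ℂ), apply_ite (starRingEnd ℂ),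
      apply_ite (starRingEnd ℂ), map_one, map_zero]
  rw [Matrix.IsHermitian, Matrix.diagonal_conjTranspose, h]

/-- The summed form of the inequalities (eq:eqR) in the proof of Theorem 1.2: under
2-nonnegativity of the traceless bisectional curvature operator, for pairwise distinct
`i, j, k` the sum of the three orthogonal bisectional curvatures is bounded by the sum of
the three holomorphic sectional curvatures. -/
theorem orth_sum_le_holSec_sum_of_twoNonnegTBC (n : ℕ) (hn : 3 ≤ n)
    (R : Fin n → Fin n → Fin n → Fin n → ℂ)
    (hR : IsKahlerCurvTensor R) (h2 : TwoNonnegTBC R) :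
    ∀ i j k : Fin n, i ≠ j → i ≠ k → j ≠ k →
      (R i i j j).re + (R i i k k).re + (R j j k k).re ≤
        (R i i i i).re + (R j j j j).re + (R k k k k).re := by
  intro i j k hij hik hjk
  set s : ℝ := (Real.sqrt 2)⁻¹ with hs
  set t : ℝ := (Real.sqrt 6)⁻¹ with ht
  have hs2 : s ^ 2 = 1 / 2 := by
    rw [hs, inv_pow, Real.sq_sqrt (by norm_num : (0:ℝ) ≤ 2)]
    norm_num
  have ht2 : t ^ 2 = 1 / 6 := by
    rw [ht, inv_pow, Real.sq_sqrt (by norm_num : (0:ℝ) ≤ 6)]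
    norm_num
  set dη : Fin n → ℂ := fun p => (s:ℂ) * (if p = i then 1 else 0)
    + (-s:ℝ) * (if p = j then 1 else 0) + (0:ℝ) * (if p = k then 1 else 0) with hdη
  set dτ : Fin n → ℂ := fun p => (t:ℂ) * (if p = i then 1 else 0)
    + (t:ℂ) * (if p = j then 1 else 0) + ((-2*t : ℝ):ℂ) * (if p = k then 1 else 0) with hdτ
  set η := Matrix.diagonal dη with hη
  set τ := Matrix.diagonal dτ with hτ
  have hηH : MemH0 η := by
    constructor
    · exact hermitian_aux s (-s) 0 i j k
    · rw [hη, Matrix.trace_diagonal, hdη]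
      simp only [Finset.sum_add_distrib, mul_ite, mul_one, mul_zero,
        Finset.sum_ite_eq', Finset.mem_univ, if_true]
      push_cast; ring
  have hτH : MemH0 τ := by
    constructor
    · exact hermitian_aux t t (-2*t) i j k
    · rw [hτ, Matrix.trace_diagonal, hdτ]
      simp only [Finset.sum_add_distrib, mul_ite, mul_one, mul_zero,
        Finset.sum_ite_eq', Finset.mem_univ, if_true]
      push_cast; ring
  have htrace : ∀ d d' : Fin n → ℂ, h0Inner (Matrix.diagonal d) (Matrix.diagonal d')
      = (∑ p, d p * d' p).re := by
    intro d d'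
    unfold h0Inner
    rw [Matrix.diagonal_mul_diagonal, Matrix.trace_diagonal]
  have hseval : ∀ (a b c a' b' c' : ℝ),
      (∑ p, ((a:ℂ) * (if p = i then 1 else 0) + (b:ℂ) * (if p = j then 1 else 0)
          + (c:ℂ) * (if p = k then 1 else 0))
        * ((a':ℂ) * (if p = i then 1 else 0) + (b':ℂ) * (if p = j then 1 else 0)
          + (c':ℂ) * (if p = k then 1 else 0)))
      = ((a*a' + b*b' + c*c' : ℝ) : ℂ) := by
    intro a b c a' b' c'
    simp only [mul_add, add_mul, mul_ite, ite_mul, mul_zero, zero_mul, mul_one,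
      Finset.sum_add_distrib, Finset.sum_ite_eq', Finset.mem_univ, if_true]
    first
    | (simp [hij, hik, hjk, hij.symm, hik.symm, hjk.symm]; push_cast; ring)
    | simp [hij, hik, hjk, hij.symm, hik.symm, hjk.symm]
  have h1 : h0Inner η η = 1 := by
    rw [hη, htrace, hdη, hseval s (-s) 0 s (-s) 0]
    rw [Complex.ofReal_re]
    nlinarith [hs2]
  have h1' : h0Inner τ τ = 1 := by
    rw [hτ, htrace, hdτ, hseval t t (-2*t) t t (-2*t)]
    rw [Complex.ofReal_re]
    nlinarith [ht2]
  have h0 : h0Inner η τ = 0 := by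
    rw [hη, hτ, htrace, hdη, hdτ, hseval s (-s) 0 t t (-2*t)]
    rw [Complex.ofReal_re]
    ring
  have hcurv := h2 η τ hηH hτH h1 h1' h0
  rw [hη, hτ, curvForm_diag', curvForm_diag'] at hcurv
  -- evaluate double sums
  have hdouble : ∀ (a b c a' b' c' : ℝ),
      (∑ p, ∑ q, R p p q q * ((a:ℂ) * (if p = i then 1 else 0) + (b:ℂ) * (if p = j then 1 else 0)
          + (c:ℂ) * (if p = k then 1 else 0))
        * ((a':ℂ) * (if q = i then 1 else 0) + (b':ℂ) * (if q = j then 1 else 0)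
          + (c':ℂ) * (if q = k then 1 else 0)))
      = ((a*a' : ℝ):ℂ)*R i i i i + ((a*b' : ℝ):ℂ)*R i i j j + ((a*c' : ℝ):ℂ)*R i i k k
        + ((b*a' : ℝ):ℂ)*R j j i i + ((b*b' : ℝ):ℂ)*R j j j j + ((b*c' : ℝ):ℂ)*R j j k k
        + ((c*a' : ℝ):ℂ)*R k k i i + ((c*b' : ℝ):ℂ)*R k k j j + ((c*c' : ℝ):ℂ)*R k k k k := by
    intro a b c a' b' c'
    simp only [mul_add, add_mul, mul_ite, ite_mul, mul_zero, zero_mul, mul_one,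
      Finset.sum_add_distrib, Finset.sum_ite_eq', Finset.mem_univ, if_true]
    push_cast
    ring
  rw [hdη, hdτ, hdouble s (-s) 0 s (-s) 0, hdouble t t (-2*t) t t (-2*t)] at hcurv
  -- symmetries
  have sym : ∀ a b : Fin n, R b b a a = R a a b b := by
    intro a b
    rw [hR.1 b b a a, hR.2.1 a b b a]
  rw [sym i j, sym i k, sym j k] at hcurv
  -- push to real parts
  simp only [Complex.add_re, Complex.re_ofReal_mul] at hcurv
  ring_nf at hcurv
  rw [hs2, ht2] at hcurv
  linarith [hcurv]
end

section
/- Let n ≥ 3 and let R be a Kähler curvature-type tensor on ℂ^n whose traceless bisectional curvature operator is 2-nonnegative. Then for all pairwise distinct indices i, j, k: Re(R(i,i,i,i)) + Re(R(j,j,j,j)) + Re(R(k,k,k,k)) ≥ 0. In particular, at most two of the holomorphic sectional curvatures Re(R(k,k,k,k)), k = 1,…,n, are negative. -/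
/-! Testing 2-nonnegativity on the pair `E_ij + E_ji`, `i E_ij - i E_ji` shows that the
bisectional sums `R(i,i,j,j) + R(j,j,i,i)` have nonnegative real part. Testing it on the
orthogonal traceless diagonal matrices `E_ii - E_jj` and `E_ii + E_jj - 2 E_kk` shows that
`2 (H_i + H_j + H_k)` dominates the sum of the six bisectional curvatures among `i, j, k`,
where `H_i = Re R(i,i,i,i)`; hence `H_i + H_j + H_k ≥ 0`, and no three of the `H_i` are
negative. -/

open BigOperators

open Matrix

section
variable {n : ℕ} (R : Fin n → Fin n → Fin n → Fin n → ℂ)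

noncomputable def curvPairing :
    Matrix (Fin n) (Fin n) ℂ →ₗ[ℂ] Matrix (Fin n) (Fin n) ℂ →ₗ[ℂ] ℂ :=
  LinearMap.mk₂ ℂ (fun η τ ↦ ∑ i, ∑ j, ∑ k, ∑ l, R i j k l * η j i * τ l k)
    (fun _ _ _ ↦ by simp only [Matrix.add_apply, mul_add, add_mul, Finset.sum_add_distrib])
    (fun _ _ _ ↦ by
      simp only [Matrix.smul_apply, smul_eq_mul, Finset.mul_sum, mul_left_comm, mul_comm])
    (fun _ _ _ ↦ by simp only [Matrix.add_apply, mul_add, Finset.sum_add_distrib])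
    (fun _ _ _ ↦ by
      simp only [Matrix.smul_apply, smul_eq_mul, Finset.mul_sum, mul_left_comm, mul_comm])

lemma curvForm_eq_re (η τ : Matrix (Fin n) (Fin n) ℂ) :
    curvForm R η τ = (curvPairing R η τ).re := rfl

@[simp]
lemma curvPairing_single_single (p q r s : Fin n) (x y : ℂ) :
    curvPairing R (single p q x) (single r s y) = R q p s r * x * y := by
  simp [curvPairing, single_apply, ite_and, mul_ite, ite_mul, Finset.sum_ite_eq]

end

section
variable {n : ℕ}

lemma MemH0.real_smul {η : Matrix (Fin n) (Fin n) ℂ} (hη : MemH0 η) (c : ℝ) :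
    MemH0 ((c : ℂ) • η) :=
  ⟨hη.1.smul (Complex.conj_ofReal c), by rw [trace_smul, hη.2, smul_zero]⟩

lemma h0Inner_real_smul_real_smul (c d : ℝ) (η τ : Matrix (Fin n) (Fin n) ℂ) :
    h0Inner ((c : ℂ) • η) ((d : ℂ) • τ) = c * d * h0Inner η τ := by
  rw [h0Inner, smul_mul_smul_comm, trace_smul, smul_eq_mul, ← Complex.ofReal_mul,
    Complex.re_ofReal_mul, h0Inner]

lemma curvForm_real_smul_real_smul (R : Fin n → Fin n → Fin n → Fin n → ℂ) (c d : ℝ)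
    (η τ : Matrix (Fin n) (Fin n) ℂ) :
    curvForm R ((c : ℂ) • η) ((d : ℂ) • τ) = c * d * curvForm R η τ := by
  rw [curvForm_eq_re, map_smul, map_smul, LinearMap.smul_apply, smul_eq_mul, smul_eq_mul,
    mul_left_comm, ← mul_assoc, ← Complex.ofReal_mul, Complex.re_ofReal_mul, curvForm_eq_re]

lemma TwoNonnegTBC.div_add_div_nonneg {R : Fin n → Fin n → Fin n → Fin n → ℂ}
    (h2 : TwoNonnegTBC R) {η τ : Matrix (Fin n) (Fin n) ℂ} (hη : MemH0 η) (hτ : MemH0 τ)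
    (hηη : 0 < h0Inner η η) (hττ : 0 < h0Inner τ τ) (hητ : h0Inner η τ = 0) :
    0 ≤ curvForm R η η / h0Inner η η + curvForm R τ τ / h0Inner τ τ := by
  set a := (√(h0Inner η η))⁻¹
  set b := (√(h0Inner τ τ))⁻¹
  have ha : a * a = (h0Inner η η)⁻¹ := by rw [← mul_inv, Real.mul_self_sqrt hηη.le]
  have hb : b * b = (h0Inner τ τ)⁻¹ := by rw [← mul_inv, Real.mul_self_sqrt hττ.le]
  have := h2 _ _ (hη.real_smul a) (hτ.real_smul b)
    (by rw [h0Inner_real_smul_real_smul, ha, inv_mul_cancel₀ hηη.ne'])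
    (by rw [h0Inner_real_smul_real_smul, hb, inv_mul_cancel₀ hττ.ne'])
    (by rw [h0Inner_real_smul_real_smul, hητ, mul_zero])
  rwa [curvForm_real_smul_real_smul, curvForm_real_smul_real_smul, ha, hb, inv_mul_eq_div,
    inv_mul_eq_div] at this

end

namespace TwoNonnegTBC

variable {n : ℕ} {R : Fin n → Fin n → Fin n → Fin n → ℂ}

lemma bisectional_add_nonneg (hR : IsKahlerCurvTensor R) (h2 : TwoNonnegTBC R) {i j : Fin n}
    (hij : i ≠ j) : 0 ≤ (R i i j j).re + (R j j i i).re := by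
  set η : Matrix (Fin n) (Fin n) ℂ := single i j 1 + single j i 1
  set τ : Matrix (Fin n) (Fin n) ℂ := single i j Complex.I + single j i (-Complex.I)
  have hη : MemH0 η := ⟨by simp [η, IsHermitian, add_comm], by simp [η, hij, hij.symm]⟩
  have hτ : MemH0 τ := ⟨by simp [τ, IsHermitian, add_comm], by simp [τ, hij, hij.symm]⟩
  have hηη : h0Inner η η = 2 := by
    norm_num [η, h0Inner, add_mul, trace_single_mul, hij, hij.symm]
  have hττ : h0Inner τ τ = 2 := by
    norm_num [τ, h0Inner, add_mul, trace_single_mul, hij, hij.symm]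
  have hητ : h0Inner η τ = 0 := by
    simp [η, τ, h0Inner, add_mul, trace_single_mul, hij, hij.symm]
  have hsum : curvForm R η η + curvForm R τ τ = 2 * ((R i i j j).re + (R j j i i).re) := by
    simp only [curvForm_eq_re, η, τ, map_add, LinearMap.add_apply, curvPairing_single_single,
      Complex.add_re, Complex.mul_re, Complex.mul_im, Complex.neg_re, Complex.neg_im,
      Complex.I_re, Complex.I_im, Complex.one_re, Complex.one_im, hR.1 j i i j, hR.1 i j j i]
    ring
  have := h2.div_add_div_nonneg hη hτ (by rw [hηη]; norm_num) (by rw [hττ]; norm_num) hητ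
  rw [hηη, hττ] at this
  linarith

lemma holSec_add_add_nonneg (hR : IsKahlerCurvTensor R) (h2 : TwoNonnegTBC R) {i j k : Fin n}
    (hij : i ≠ j) (hik : i ≠ k) (hjk : j ≠ k) :
    0 ≤ (R i i i i).re + (R j j j j).re + (R k k k k).re := by
  set η : Matrix (Fin n) (Fin n) ℂ := single i i 1 + single j j (-1)
  set τ : Matrix (Fin n) (Fin n) ℂ := single i i 1 + single j j 1 + single k k (-2)
  have hη : MemH0 η := ⟨by simp [η, IsHermitian], by simp [η]⟩
  have hτ : MemH0 τ := ⟨by simp [τ, IsHermitian], by norm_num [τ]⟩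
  have hηη : h0Inner η η = 2 := by
    norm_num [η, h0Inner, add_mul, trace_single_mul, hij, hij.symm]
  have hττ : h0Inner τ τ = 6 := by
    norm_num [τ, h0Inner, add_mul, trace_single_mul, hij, hij.symm, hik, hik.symm, hjk, hjk.symm]
  have hητ : h0Inner η τ = 0 := by
    norm_num [η, τ, h0Inner, add_mul, trace_single_mul, hij, hij.symm, hik, hik.symm, hjk,
      hjk.symm]
  have hsum : curvForm R η η / 2 + curvForm R τ τ / 6 =
      (2 * ((R i i i i).re + (R j j j j).re + (R k k k k).re) -
        ((R i i j j).re + (R j j i i).re) - ((R i i k k).re + (R k k i i).re) -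
        ((R j j k k).re + (R k k j j).re)) / 3 := by
    simp only [curvForm_eq_re, η, τ, map_add, LinearMap.add_apply, curvPairing_single_single,
      Complex.add_re, Complex.mul_re, Complex.mul_im, Complex.neg_re, Complex.neg_im,
      Complex.one_re, Complex.one_im, Complex.re_ofNat, Complex.im_ofNat]
    ring
  have := h2.div_add_div_nonneg hη hτ (by rw [hηη]; norm_num) (by rw [hττ]; norm_num) hητ
  rw [hηη, hττ, hsum] at this
  linarith [h2.bisectional_add_nonneg hR hij, h2.bisectional_add_nonneg hR hik,
    h2.bisectional_add_nonneg hR hjk]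

end TwoNonnegTBC

theorem three_holSec_sum_nonneg_of_twoNonnegTBC_general (n : ℕ)
    (R : Fin n → Fin n → Fin n → Fin n → ℂ)
    (hR : IsKahlerCurvTensor R) (h2 : TwoNonnegTBC R) :
    (∀ i j k : Fin n, i ≠ j → i ≠ k → j ≠ k →
      0 ≤ (R i i i i).re + (R j j j j).re + (R k k k k).re) ∧
    Set.ncard {k : Fin n | (R k k k k).re < 0} ≤ 2 := by
  refine ⟨fun _ _ _ ↦ h2.holSec_add_add_nonneg hR, ?_⟩
  by_contra! hcard
  obtain ⟨a, ha, b, hb, c, hc, hab, hac, hbc⟩ := (Set.two_lt_ncard).1 hcard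
  have := h2.holSec_add_add_nonneg hR hab hac hbc
  simp only [Set.mem_ofPred_eq] at ha hb hc
  linarith

/-- From the proof of Theorem 1.2: under 2-nonnegativity of the traceless bisectional
curvature operator, any three distinct holomorphic sectional curvatures have nonnegative
sum; in particular at most two of the holomorphic sectional curvatures are negative. -/
theorem three_holSec_sum_nonneg_of_twoNonnegTBC (n : ℕ) (hn : 3 ≤ n)
    (R : Fin n → Fin n → Fin n → Fin n → ℂ)
    (hR : IsKahlerCurvTensor R) (h2 : TwoNonnegTBC R) :
    (∀ i j k : Fin n, i ≠ j → i ≠ k → j ≠ k →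
      0 ≤ (R i i i i).re + (R j j j j).re + (R k k k k).re) ∧
    Set.ncard {k : Fin n | (R k k k k).re < 0} ≤ 2 :=
  three_holSec_sum_nonneg_of_twoNonnegTBC_general n R hR h2
end

section
/- Let n ≥ 3 and let R be a Kähler curvature-type tensor on ℂ^n whose traceless bisectional curvature operator is 2-nonnegative, with scalar curvature r. Then (1/n)·r ≤ Σ_{k=1}^n Re(R(k,k,k,k)) ≤ r. -/
open BigOperators

namespace HolSecAux

variable {n : ℕ}

/-! ### Off-diagonal Hermitian test matrices -/

noncomputable def offM (p q : Fin n) (x y : ℂ) : Matrix (Fin n) (Fin n) ℂ :=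
  Matrix.of fun b a => (if b = p ∧ a = q then x else 0) + (if b = q ∧ a = p then y else 0)

lemma offM_herm (p q : Fin n) (x y : ℂ) (hxy : starRingEnd ℂ x = y) :
    (offM p q x y).IsHermitian := by
  subst hxy
  ext b a
  simp only [offM, Matrix.conjTranspose_apply, Matrix.of_apply, map_add, apply_ite,
    map_zero, RingHom.id_apply, Complex.conj_conj]
  by_cases h1 : a = p <;> by_cases h2 : b = q <;> by_cases h3 : a = q <;> by_cases h4 : b = p <;>
    simp_all <;> ring

lemma offM_trace (p q : Fin n) (x y : ℂ) (hpq : p ≠ q) : (offM p q x y).trace = 0 := by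
  have h : ∀ a : Fin n,
      ((if a = p ∧ a = q then x else 0) + if a = q ∧ a = p then y else 0) = 0 := by
    intro a
    by_cases h1 : a = p <;> by_cases h2 : a = q <;> simp_all
  simp [offM, Matrix.trace, Matrix.diag, h]

lemma offM_inner (p q : Fin n) (x y z w : ℂ) (hpq : p ≠ q) :
    h0Inner (offM p q x y) (offM p q z w) = (x * w + y * z).re := by
  unfold h0Inner
  congr 1
  simp only [Matrix.trace, Matrix.diag, Matrix.mul_apply, offM, Matrix.of_apply,
    mul_add, add_mul, Finset.sum_add_distrib, ite_and, mul_ite, ite_mul, mul_zero, zero_mul,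
    Finset.sum_ite_eq, Finset.sum_ite_eq', Finset.mem_univ, if_true, Finset.sum_const_zero,
    add_zero, zero_add]
  simp [hpq, hpq.symm]
  ring

lemma offM_curv (R : Fin n → Fin n → Fin n → Fin n → ℂ) (p q : Fin n) (x y z w : ℂ) :
    curvForm R (offM p q x y) (offM p q z w)
      = (R q p q p * x * z + R q p p q * x * w + R p q q p * y * z + R p q p q * y * w).re := by
  unfold curvForm
  congr 1
  simp only [offM, Matrix.of_apply, mul_add, add_mul, Finset.sum_add_distrib, ite_and,
    mul_ite, ite_mul, mul_zero, zero_mul, Finset.sum_ite_eq, Finset.sum_ite_eq',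
    Finset.mem_univ, if_true, Finset.sum_const_zero, add_zero, zero_add,
    Finset.sum_ite_irrel]
  ring

/-- Off-diagonal entries of the "Ricci-type" matrix `(i,k) ↦ Re R(i,i,k,k)` are nonnegative. -/
lemma cc_nonneg (R : Fin n → Fin n → Fin n → Fin n → ℂ) (hR : IsKahlerCurvTensor R)
    (h2 : TwoNonnegTBC R) {i k : Fin n} (hik : i ≠ k) : 0 ≤ (R i i k k).re := by
  obtain ⟨sym1, sym2, sym3⟩ := hR
  set s : ℝ := (Real.sqrt 2)⁻¹ with hs
  have hss : s * s = 1 / 2 := by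
    rw [hs, ← mul_inv, Real.mul_self_sqrt (by norm_num : (0:ℝ) ≤ 2)]
    norm_num
  set η := offM i k (s : ℂ) (s : ℂ) with hη
  set τ := offM i k ((s : ℂ) * Complex.I) (-((s : ℂ) * Complex.I)) with hτ
  have hmη : MemH0 η := ⟨offM_herm _ _ _ _ (by simp [Complex.conj_ofReal]), offM_trace _ _ _ _ hik⟩
  have hmτ : MemH0 τ := by
    refine ⟨offM_herm _ _ _ _ ?_, offM_trace _ _ _ _ hik⟩
    simp [map_mul, Complex.conj_ofReal, Complex.conj_I]
  have h1 : h0Inner η η = 1 := by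
    rw [hη, offM_inner _ _ _ _ _ _ hik]
    have : ((s:ℂ) * (s:ℂ) + (s:ℂ) * (s:ℂ)) = ((2 * (s*s) : ℝ) : ℂ) := by push_cast; ring
    rw [this, Complex.ofReal_re, hss]; norm_num
  have h1' : h0Inner τ τ = 1 := by
    rw [hτ, offM_inner _ _ _ _ _ _ hik]
    have : ((s:ℂ) * Complex.I * -((s:ℂ) * Complex.I) + -((s:ℂ) * Complex.I) * ((s:ℂ) * Complex.I))
        = ((2 * (s*s) : ℝ) : ℂ) := by
      push_cast
      linear_combination (-(2 * (s:ℂ) * (s:ℂ))) * Complex.I_sq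
    rw [this, Complex.ofReal_re, hss]; norm_num
  have h0 : h0Inner η τ = 0 := by
    rw [hη, hτ, offM_inner _ _ _ _ _ _ hik]
    have : ((s:ℂ) * -((s:ℂ) * Complex.I) + (s:ℂ) * ((s:ℂ) * Complex.I)) = 0 := by ring
    rw [this, Complex.zero_re]
  have key := h2 η τ hmη hmτ h1 h1' h0
  rw [hη, hτ, offM_curv, offM_curv] at key
  have hc : (R k i k i * (s:ℂ) * (s:ℂ) + R k i i k * (s:ℂ) * (s:ℂ)
        + R i k k i * (s:ℂ) * (s:ℂ) + R i k i k * (s:ℂ) * (s:ℂ))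
      + (R k i k i * ((s:ℂ)*Complex.I) * ((s:ℂ)*Complex.I)
        + R k i i k * ((s:ℂ)*Complex.I) * (-((s:ℂ)*Complex.I))
        + R i k k i * (-((s:ℂ)*Complex.I)) * ((s:ℂ)*Complex.I)
        + R i k i k * (-((s:ℂ)*Complex.I)) * (-((s:ℂ)*Complex.I)))
      = ((2 * (s*s) : ℝ):ℂ) * (R k i i k + R i k k i) := by
    push_cast
    linear_combination ((s:ℂ)^2 * (R k i k i + R i k i k) - (s:ℂ)^2 * (R k i i k + R i k k i))
      * Complex.I_sq
  rw [← Complex.add_re, hc] at key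
  have hre : (((2 * (s*s) : ℝ):ℂ) * (R k i i k + R i k k i)).re
      = 2 * (s*s) * ((R k i i k + R i k k i).re) := by
    simp [Complex.mul_re]
  rw [hre, hss] at key
  have e1 : R k i i k = R i i k k := sym1 k i i k
  have e2 : R i k k i = R i i k k := by rw [sym1 i k k i, sym2 k k i i, sym1 k i i k]
  rw [e1, e2] at key
  simp only [Complex.add_re] at key
  linarith

/-! ### Diagonal test matrices -/

noncomputable def dg (d : Fin n → ℝ) : Matrix (Fin n) (Fin n) ℂ :=
  Matrix.diagonal fun a => (d a : ℂ)

lemma dg_herm (d : Fin n → ℝ) : (dg d).IsHermitian := by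
  apply Matrix.isHermitian_diagonal_iff.2
  intro i
  exact Complex.conj_ofReal _

lemma dg_trace (d : Fin n → ℝ) : (dg d).trace = ((∑ a, d a : ℝ) : ℂ) := by
  simp [dg, Matrix.trace_diagonal]

lemma dg_inner (d e : Fin n → ℝ) : h0Inner (dg d) (dg e) = ∑ a, d a * e a := by
  unfold h0Inner
  rw [dg, dg, Matrix.diagonal_mul_diagonal, Matrix.trace_diagonal, Complex.re_sum]
  refine Finset.sum_congr rfl fun a _ => ?_
  rw [← Complex.ofReal_mul, Complex.ofReal_re]

lemma dg_curv (R : Fin n → Fin n → Fin n → Fin n → ℂ) (d e : Fin n → ℝ) :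
    curvForm R (dg d) (dg e) = ∑ i, ∑ k, (R i i k k).re * (d i * e k) := by
  unfold curvForm
  simp only [dg, Matrix.diagonal_apply, mul_ite, ite_mul, mul_zero, zero_mul,
    Finset.sum_ite_irrel, Finset.sum_const_zero,
    Finset.sum_ite_eq, Finset.sum_ite_eq', Finset.mem_univ, if_true]
  rw [Complex.re_sum]
  refine Finset.sum_congr rfl fun i _ => ?_
  rw [Complex.re_sum]
  refine Finset.sum_congr rfl fun k _ => ?_
  rw [mul_assoc, ← Complex.ofReal_mul]
  simp [Complex.mul_re]

/-- For three distinct directions, the sum of the three "traceless holomorphic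
sectional differences" is nonnegative. -/
lemma triple_nonneg (R : Fin n → Fin n → Fin n → Fin n → ℂ) (hR : IsKahlerCurvTensor R)
    (h2 : TwoNonnegTBC R) {i j k : Fin n} (hij : i ≠ j) (hik : i ≠ k) (hjk : j ≠ k) :
    0 ≤ ((R i i i i).re + (R j j j j).re - 2 * (R i i j j).re)
      + ((R i i i i).re + (R k k k k).re - 2 * (R i i k k).re)
      + ((R j j j j).re + (R k k k k).re - 2 * (R j j k k).re) := by
  obtain ⟨sym1, sym2, _⟩ := hR
  have hcs : ∀ a b : Fin n, (R a a b b).re = (R b b a a).re := by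
    intro a b
    rw [sym1 a a b b, sym2 b a a b]
  set s : ℝ := (Real.sqrt 2)⁻¹ with hs
  set t : ℝ := (Real.sqrt 6)⁻¹ with ht
  have hss : s * s = 1 / 2 := by
    rw [hs, ← mul_inv, Real.mul_self_sqrt (by norm_num : (0:ℝ) ≤ 2)]; norm_num
  have htt : t * t = 1 / 6 := by
    rw [ht, ← mul_inv, Real.mul_self_sqrt (by norm_num : (0:ℝ) ≤ 6)]; norm_num
  set d : Fin n → ℝ := fun a => (if a = i then s else 0) + (if a = j then -s else 0) with hd
  set e : Fin n → ℝ :=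
    fun a => ((if a = i then t else 0) + (if a = j then t else 0)) + (if a = k then -(2*t) else 0)
    with he
  have hmd : MemH0 (dg d) := by
    refine ⟨dg_herm d, ?_⟩
    rw [dg_trace]
    have : ∑ a, d a = 0 := by
      simp [hd, Finset.sum_add_distrib, Finset.sum_ite_eq', Finset.mem_univ]
    rw [this, Complex.ofReal_zero]
  have hme : MemH0 (dg e) := by
    refine ⟨dg_herm e, ?_⟩
    rw [dg_trace]
    have : ∑ a, e a = 0 := by
      simp [he, Finset.sum_add_distrib, Finset.sum_ite_eq', Finset.mem_univ]
      ring
    rw [this, Complex.ofReal_zero]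
  have hdd : h0Inner (dg d) (dg d) = 1 := by
    rw [dg_inner]
    simp only [hd, add_mul, mul_add, ite_mul, mul_ite, mul_zero, zero_mul,
      Finset.sum_add_distrib, Finset.sum_ite_eq', Finset.mem_univ, if_true,
      Finset.sum_ite_irrel, Finset.sum_const_zero, hij, hij.symm, if_neg, ite_false]
    linear_combination 2 * hss
  have hee : h0Inner (dg e) (dg e) = 1 := by
    rw [dg_inner]
    simp only [he, add_mul, mul_add, ite_mul, mul_ite, mul_zero, zero_mul,
      Finset.sum_add_distrib, Finset.sum_ite_eq', Finset.mem_univ, if_true,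
      Finset.sum_ite_irrel, Finset.sum_const_zero, hij, hij.symm, hik, hik.symm,
      hjk, hjk.symm, if_neg, ite_false]
    linear_combination 6 * htt
  have hde : h0Inner (dg d) (dg e) = 0 := by
    rw [dg_inner]
    simp only [hd, he, add_mul, mul_add, ite_mul, mul_ite, mul_zero, zero_mul,
      Finset.sum_add_distrib, Finset.sum_ite_eq', Finset.mem_univ, if_true,
      Finset.sum_ite_irrel, Finset.sum_const_zero, hij, hij.symm, hik, hik.symm,
      hjk, hjk.symm, if_neg, ite_false]
    ring
  have key := h2 (dg d) (dg e) hmd hme hdd hee hde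
  rw [dg_curv, dg_curv] at key
  have Edd : (∑ a, ∑ b, (R a a b b).re * (d a * d b))
      = (1/2) * ((R i i i i).re + (R j j j j).re - (R i i j j).re - (R j j i i).re) := by
    simp only [hd, add_mul, mul_add, ite_mul, mul_ite, mul_zero, zero_mul,
      Finset.sum_add_distrib, Finset.sum_ite_eq', Finset.mem_univ, if_true,
      Finset.sum_ite_irrel, Finset.sum_const_zero, hij, hij.symm, if_neg, ite_false]
    linear_combination ((R i i i i).re + (R j j j j).re - (R i i j j).re - (R j j i i).re) * hss
  have Eee : (∑ a, ∑ b, (R a a b b).re * (e a * e b))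
      = (1/6) * ((R i i i i).re + (R j j j j).re + 4 * (R k k k k).re
          + (R i i j j).re + (R j j i i).re - 2 * (R i i k k).re - 2 * (R k k i i).re
          - 2 * (R j j k k).re - 2 * (R k k j j).re) := by
    simp only [he, add_mul, mul_add, ite_mul, mul_ite, mul_zero, zero_mul,
      Finset.sum_add_distrib, Finset.sum_ite_eq', Finset.mem_univ, if_true,
      Finset.sum_ite_irrel, Finset.sum_const_zero, hij, hij.symm, hik, hik.symm,
      hjk, hjk.symm, if_neg, ite_false]
    linear_combination ((R i i i i).re + (R j j j j).re + 4 * (R k k k k).re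
          + (R i i j j).re + (R j j i i).re - 2 * (R i i k k).re - 2 * (R k k i i).re
          - 2 * (R j j k k).re - 2 * (R k k j j).re) * htt
  rw [Edd, Eee] at key
  have h1 := hcs i j
  have h2' := hcs i k
  have h3 := hcs j k
  linarith

/-! ### Combinatorial summation lemmas -/

lemma sum_ite_ne_ne (a b : Fin n) (hab : a ≠ b) (X : ℝ) :
    ∑ x : Fin n, (if a ≠ x ∧ b ≠ x then X else 0) = (n : ℝ) * X - 2 * X := by
  have hpt : ∀ x : Fin n, (if a ≠ x ∧ b ≠ x then X else 0)
      = X - (if a = x then X else 0) - (if b = x then X else 0) := by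
    intro x
    by_cases h1 : a = x <;> by_cases h2 : b = x <;> simp_all
  simp only [hpt]
  rw [Finset.sum_sub_distrib, Finset.sum_sub_distrib, Finset.sum_const,
    Finset.sum_ite_eq, Finset.sum_ite_eq]
  simp [Finset.card_univ, mul_comm]
  ring

lemma sum_triple_eval (f : Fin n → Fin n → ℝ) (hf : ∀ a, f a a = 0) :
    ∑ i : Fin n, ∑ j : Fin n, ∑ k : Fin n,
        (if i ≠ j ∧ i ≠ k ∧ j ≠ k then f i j else 0)
      = ((n : ℝ) - 2) * ∑ i, ∑ j, f i j := by
  have step : ∀ i j : Fin n, ∑ k : Fin n, (if i ≠ j ∧ i ≠ k ∧ j ≠ k then f i j else 0)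
      = ((n : ℝ) - 2) * f i j := by
    intro i j
    by_cases hij : i = j
    · subst hij
      simp [hf]
    · have : ∀ k : Fin n, (if i ≠ j ∧ i ≠ k ∧ j ≠ k then f i j else 0)
          = (if i ≠ k ∧ j ≠ k then f i j else 0) := by
        intro k
        by_cases h : i ≠ k ∧ j ≠ k <;> simp [h, hij]
      simp only [this]
      rw [sum_ite_ne_ne i j hij]
      ring
  simp only [step, ← Finset.mul_sum]

lemma Q_nonneg (hn : 3 ≤ n) (q : Fin n → Fin n → ℝ) (hq0 : ∀ a, q a a = 0)
    (htri : ∀ i j k : Fin n, i ≠ j → i ≠ k → j ≠ k → 0 ≤ q i j + q i k + q j k) :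
    0 ≤ ∑ i, ∑ j, q i j := by
  have h0sum : 0 ≤ ∑ i : Fin n, ∑ j : Fin n, ∑ k : Fin n,
      (if i ≠ j ∧ i ≠ k ∧ j ≠ k then q i j + q i k + q j k else 0) := by
    refine Finset.sum_nonneg fun i _ => Finset.sum_nonneg fun j _ =>
      Finset.sum_nonneg fun k _ => ?_
    by_cases h : i ≠ j ∧ i ≠ k ∧ j ≠ k
    · rw [if_pos h]; exact htri i j k h.1 h.2.1 h.2.2
    · rw [if_neg h]
  have hsplit : ∀ i j k : Fin n, (if i ≠ j ∧ i ≠ k ∧ j ≠ k then q i j + q i k + q j k else 0)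
      = (if i ≠ j ∧ i ≠ k ∧ j ≠ k then q i j else 0)
        + (if i ≠ j ∧ i ≠ k ∧ j ≠ k then q i k else 0)
        + (if i ≠ j ∧ i ≠ k ∧ j ≠ k then q j k else 0) := by
    intro i j k
    by_cases h : i ≠ j ∧ i ≠ k ∧ j ≠ k <;> simp [h]
  simp only [hsplit, Finset.sum_add_distrib] at h0sum
  have hT2 : (∑ i : Fin n, ∑ j : Fin n, ∑ k : Fin n,
        (if i ≠ j ∧ i ≠ k ∧ j ≠ k then q i k else 0))
      = ∑ i : Fin n, ∑ j : Fin n, ∑ k : Fin n,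
        (if i ≠ j ∧ i ≠ k ∧ j ≠ k then q i j else 0) := by
    calc (∑ i : Fin n, ∑ j : Fin n, ∑ k : Fin n,
          (if i ≠ j ∧ i ≠ k ∧ j ≠ k then q i k else 0))
        = ∑ i : Fin n, ∑ k : Fin n, ∑ j : Fin n,
          (if i ≠ j ∧ i ≠ k ∧ j ≠ k then q i k else 0) :=
          Finset.sum_congr rfl fun i _ => Finset.sum_comm
      _ = ∑ i : Fin n, ∑ j : Fin n, ∑ k : Fin n,
          (if i ≠ k ∧ i ≠ j ∧ k ≠ j then q i j else 0) := rfl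
      _ = ∑ i : Fin n, ∑ j : Fin n, ∑ k : Fin n,
          (if i ≠ j ∧ i ≠ k ∧ j ≠ k then q i j else 0) := by
          refine Finset.sum_congr rfl fun i _ => Finset.sum_congr rfl fun j _ =>
            Finset.sum_congr rfl fun k _ => ?_
          refine if_congr ?_ rfl rfl
          constructor
          · rintro ⟨h1, h2, h3⟩; exact ⟨h2, h1, fun h => h3 h.symm⟩
          · rintro ⟨h1, h2, h3⟩; exact ⟨h2, h1, fun h => h3 h.symm⟩
  have hT3 : (∑ i : Fin n, ∑ j : Fin n, ∑ k : Fin n,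
        (if i ≠ j ∧ i ≠ k ∧ j ≠ k then q j k else 0))
      = ∑ i : Fin n, ∑ j : Fin n, ∑ k : Fin n,
        (if i ≠ j ∧ i ≠ k ∧ j ≠ k then q i j else 0) := by
    calc (∑ i : Fin n, ∑ j : Fin n, ∑ k : Fin n,
          (if i ≠ j ∧ i ≠ k ∧ j ≠ k then q j k else 0))
        = ∑ j : Fin n, ∑ i : Fin n, ∑ k : Fin n,
          (if i ≠ j ∧ i ≠ k ∧ j ≠ k then q j k else 0) := Finset.sum_comm
      _ = ∑ j : Fin n, ∑ k : Fin n, ∑ i : Fin n,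
          (if i ≠ j ∧ i ≠ k ∧ j ≠ k then q j k else 0) :=
          Finset.sum_congr rfl fun j _ => Finset.sum_comm
      _ = ∑ i : Fin n, ∑ j : Fin n, ∑ k : Fin n,
          (if k ≠ i ∧ k ≠ j ∧ i ≠ j then q i j else 0) := rfl
      _ = ∑ i : Fin n, ∑ j : Fin n, ∑ k : Fin n,
          (if i ≠ j ∧ i ≠ k ∧ j ≠ k then q i j else 0) := by
          refine Finset.sum_congr rfl fun i _ => Finset.sum_congr rfl fun j _ =>
            Finset.sum_congr rfl fun k _ => ?_
          refine if_congr ?_ rfl rfl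
          constructor
          · rintro ⟨h1, h2, h3⟩; exact ⟨h3, fun h => h1 h.symm, fun h => h2 h.symm⟩
          · rintro ⟨h1, h2, h3⟩; exact ⟨fun h => h2 h.symm, fun h => h3 h.symm, h1⟩
  rw [hT2, hT3, sum_triple_eval q hq0] at h0sum
  have hn' : (3 : ℝ) ≤ (n : ℝ) := by exact_mod_cast hn
  nlinarith [h0sum, hn']

end HolSecAux

/-- From the proof of Theorem 1.2: under 2-nonnegativity of the traceless bisectional
curvature operator, `(1/n)·r ≤ Σ_k Re R(k,k,k,k) ≤ r` where `r` is the scalar curvature. -/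
theorem holSec_sum_comparable_to_scalar (n : ℕ) (hn : 3 ≤ n)
    (R : Fin n → Fin n → Fin n → Fin n → ℂ)
    (hR : IsKahlerCurvTensor R) (h2 : TwoNonnegTBC R) :
    (1 / (n : ℝ)) * scalarCurv R ≤ ∑ k, (R k k k k).re ∧
      ∑ k, (R k k k k).re ≤ scalarCurv R := by
  have hscal : scalarCurv R = ∑ i, ∑ j, (R i i j j).re := by
    unfold scalarCurv ricci
    exact Finset.sum_congr rfl fun i _ => Complex.re_sum _ _
  constructor
  · -- lower bound
    set q : Fin n → Fin n → ℝ :=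
      fun a b => (R a a a a).re + (R b b b b).re - 2 * (R a a b b).re with hq
    have hq0 : ∀ a, q a a = 0 := by
      intro a; simp only [hq]; ring
    have htri : ∀ i j k : Fin n, i ≠ j → i ≠ k → j ≠ k → 0 ≤ q i j + q i k + q j k := by
      intro i j k hij hik hjk
      have := HolSecAux.triple_nonneg R hR h2 hij hik hjk
      simp only [hq]
      linarith
    have hQ := HolSecAux.Q_nonneg hn q hq0 htri
    have hexp : (∑ i, ∑ j, q i j)
        = (n : ℝ) * (∑ a, (R a a a a).re) + (n : ℝ) * (∑ a, (R a a a a).re)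
          - 2 * ∑ i, ∑ j, (R i i j j).re := by
      simp only [hq, Finset.sum_sub_distrib, Finset.sum_add_distrib, Finset.sum_const,
        Finset.card_univ, Fintype.card_fin, nsmul_eq_mul, ← Finset.mul_sum]
    rw [hexp] at hQ
    rw [hscal]
    have hn0 : (0 : ℝ) < (n : ℝ) := by
      have : 0 < n := by omega
      exact_mod_cast this
    have hr : (∑ i, ∑ j, (R i i j j).re) ≤ (n : ℝ) * ∑ a, (R a a a a).re := by linarith
    calc (1 / (n : ℝ)) * (∑ i, ∑ j, (R i i j j).re)
        ≤ (1 / (n : ℝ)) * ((n : ℝ) * ∑ a, (R a a a a).re) := by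
          apply mul_le_mul_of_nonneg_left hr
          positivity
      _ = ∑ a, (R a a a a).re := by
          field_simp
  · -- upper bound
    rw [hscal]
    refine Finset.sum_le_sum fun i _ => ?_
    rw [← Finset.add_sum_erase Finset.univ (fun j => (R i i j j).re) (Finset.mem_univ i)]
    refine le_add_of_nonneg_right (Finset.sum_nonneg fun j hj => ?_)
    exact HolSecAux.cc_nonneg R hR h2 (Finset.ne_of_mem_erase hj).symm
end

section
/- There exists a constant C > 0 depending only on n with the following property: for every n ≥ 3 and every Kähler curvature-type tensor R on ℂ^n whose traceless bisectional curvature operator is 2-nonnegative, one has |Re(R(k,k,k,k))| ≤ C·r for every index k, where r is the scalar curvature of R. -/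
open BigOperators

/-! ### Auxiliary material for the proof -/

namespace HolSecAux

variable {n : ℕ}

/-- A matrix with (at most) two nonzero entries. -/
def tm (a₁ b₁ a₂ b₂ : Fin n) (c₁ c₂ : ℂ) : Matrix (Fin n) (Fin n) ℂ :=
  fun i j => (if i = a₁ ∧ j = b₁ then c₁ else 0) + (if i = a₂ ∧ j = b₂ then c₂ else 0)

lemma sum2 (g : Fin n → Fin n → ℂ) (a₁ b₁ a₂ b₂ : Fin n) (c₁ c₂ : ℂ) :
    ∑ x : Fin n, ∑ y : Fin n, g x y * tm a₁ b₁ a₂ b₂ c₁ c₂ y x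
      = g b₁ a₁ * c₁ + g b₂ a₂ * c₂ := by
  simp [tm, mul_add, Finset.sum_add_distrib, mul_ite, mul_zero, ite_and,
    Finset.sum_ite_eq, Finset.sum_ite_eq']

lemma sum2l (g : Fin n → Fin n → ℂ) (a₁ b₁ a₂ b₂ : Fin n) (c₁ c₂ : ℂ) :
    ∑ x : Fin n, ∑ y : Fin n, tm a₁ b₁ a₂ b₂ c₁ c₂ x y * g x y
      = c₁ * g a₁ b₁ + c₂ * g a₂ b₂ := by
  simp [tm, add_mul, Finset.sum_add_distrib, ite_mul, zero_mul, ite_and,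
    Finset.sum_ite_eq, Finset.sum_ite_eq']

lemma curvForm_tm (R : Fin n → Fin n → Fin n → Fin n → ℂ)
    (a₁ b₁ a₂ b₂ a₁' b₁' a₂' b₂' : Fin n) (c₁ c₂ c₁' c₂' : ℂ) :
    curvForm R (tm a₁ b₁ a₂ b₂ c₁ c₂) (tm a₁' b₁' a₂' b₂' c₁' c₂')
      = (((R b₁ a₁ b₁' a₁' * c₁' + R b₁ a₁ b₂' a₂' * c₂') * c₁)
        + ((R b₂ a₂ b₁' a₁' * c₁' + R b₂ a₂ b₂' a₂' * c₂') * c₂)).re := by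
  unfold curvForm
  congr 1
  have step1 : ∀ i j : Fin n,
      ∑ k, ∑ l, R i j k l * tm a₁ b₁ a₂ b₂ c₁ c₂ j i * tm a₁' b₁' a₂' b₂' c₁' c₂' l k
        = (R i j b₁' a₁' * c₁' + R i j b₂' a₂' * c₂') * tm a₁ b₁ a₂ b₂ c₁ c₂ j i := by
    intro i j
    have h := sum2 (fun k l => R i j k l * tm a₁ b₁ a₂ b₂ c₁ c₂ j i) a₁' b₁' a₂' b₂' c₁' c₂'
    rw [h]; ring
  simp_rw [step1]
  have h2 := sum2 (fun i j => R i j b₁' a₁' * c₁' + R i j b₂' a₂' * c₂') a₁ b₁ a₂ b₂ c₁ c₂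
  rw [h2]

lemma h0Inner_tm (a₁ b₁ a₂ b₂ a₁' b₁' a₂' b₂' : Fin n) (c₁ c₂ c₁' c₂' : ℂ) :
    h0Inner (tm a₁ b₁ a₂ b₂ c₁ c₂) (tm a₁' b₁' a₂' b₂' c₁' c₂')
      = (c₁ * tm a₁' b₁' a₂' b₂' c₁' c₂' b₁ a₁ + c₂ * tm a₁' b₁' a₂' b₂' c₁' c₂' b₂ a₂).re := by
  unfold h0Inner
  congr 1
  rw [Matrix.trace]
  simp_rw [Matrix.diag_apply, Matrix.mul_apply]
  exact sum2l (fun i j => tm a₁' b₁' a₂' b₂' c₁' c₂' j i) a₁ b₁ a₂ b₂ c₁ c₂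

lemma trace_tm (a₁ b₁ a₂ b₂ : Fin n) (c₁ c₂ : ℂ) :
    Matrix.trace (tm a₁ b₁ a₂ b₂ c₁ c₂)
      = (if a₁ = b₁ then c₁ else 0) + (if a₂ = b₂ then c₂ else 0) := by
  rw [Matrix.trace]
  simp [Matrix.diag_apply, tm, ite_and, Finset.sum_add_distrib,
    Finset.sum_ite_eq, Finset.sum_ite_eq']

lemma herm_off (a b : Fin n) (c d : ℂ) (h : starRingEnd ℂ c = d) :
    (tm a b b a c d).IsHermitian := by
  have h' : starRingEnd ℂ d = c := by rw [← h, Complex.conj_conj]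
  unfold Matrix.IsHermitian
  ext i j
  simp only [Matrix.conjTranspose_apply, tm, map_add]
  by_cases e1 : i = a <;> by_cases e2 : j = b <;> by_cases e3 : i = b <;> by_cases e4 : j = a <;>
    simp [e1, e2, e3, e4, apply_ite (starRingEnd ℂ), h, h', add_comm, and_comm]

lemma herm_diag (a b : Fin n) (c d : ℂ) (hc : starRingEnd ℂ c = c) (hd : starRingEnd ℂ d = d) :
    (tm a a b b c d).IsHermitian := by
  unfold Matrix.IsHermitian
  ext i j
  simp only [Matrix.conjTranspose_apply, tm, map_add]
  by_cases e1 : i = a <;> by_cases e2 : j = a <;> by_cases e3 : i = b <;> by_cases e4 : j = b <;>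
    simp [e1, e2, e3, e4, apply_ite (starRingEnd ℂ), hc, hd, add_comm, and_comm]

/-- The two key pointwise inequalities coming from 2-nonnegativity. -/
lemma pair_nonneg (R : Fin n → Fin n → Fin n → Fin n → ℂ)
    (hK : IsKahlerCurvTensor R) (hT : TwoNonnegTBC R) {a b : Fin n} (hab : a ≠ b) :
    0 ≤ (R a a b b).re ∧ 0 ≤ (R a a a a).re + (R b b b b).re := by
  obtain ⟨sym1, sym2, _⟩ := hK
  have e1 : R b a a b = R a a b b := sym1 b a a b
  have e2 : R a b b a = R b b a a := sym1 a b b a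
  have e3 : R b b a a = R a a b b := ((sym1 a a b b).trans (sym2 b a a b)).symm
  set s : ℝ := (Real.sqrt 2)⁻¹ with hsdef
  set sc : ℂ := (s : ℂ) with hscdef
  have hcs : starRingEnd ℂ sc = sc := Complex.conj_ofReal s
  have hs2 : sc * sc = 1/2 := by
    rw [hscdef, ← Complex.ofReal_mul, hsdef, ← mul_inv,
      Real.mul_self_sqrt (by norm_num : (0:ℝ) ≤ 2)]
    norm_num
  have hI := Complex.I_mul_I
  -- the three test matrices
  have memS : MemH0 (tm a b b a sc sc) :=
    ⟨herm_off a b sc sc hcs, by rw [trace_tm]; simp [hab, hab.symm]⟩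
  have memA : MemH0 (tm a b b a (sc * Complex.I) (-(sc * Complex.I))) :=
    ⟨herm_off a b _ _ (by rw [map_mul, hcs, Complex.conj_I]; ring),
     by rw [trace_tm]; simp [hab, hab.symm]⟩
  have memD : MemH0 (tm a a b b sc (-sc)) :=
    ⟨herm_diag a b sc (-sc) hcs (by rw [map_neg, hcs]), by rw [trace_tm]; simp⟩
  -- entries
  have eSab : tm a b b a sc sc a b = sc := by simp [tm, hab, hab.symm]
  have eSba : tm a b b a sc sc b a = sc := by simp [tm, hab, hab.symm]
  have eSaa : tm a b b a sc sc a a = 0 := by simp [tm, hab, hab.symm]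
  have eSbb : tm a b b a sc sc b b = 0 := by simp [tm, hab, hab.symm]
  have eAab : tm a b b a (sc * Complex.I) (-(sc * Complex.I)) a b = sc * Complex.I := by
    simp [tm, hab, hab.symm]
  have eAba : tm a b b a (sc * Complex.I) (-(sc * Complex.I)) b a = -(sc * Complex.I) := by
    simp [tm, hab, hab.symm]
  have eAaa : tm a b b a (sc * Complex.I) (-(sc * Complex.I)) a a = 0 := by
    simp [tm, hab, hab.symm]
  have eAbb : tm a b b a (sc * Complex.I) (-(sc * Complex.I)) b b = 0 := by
    simp [tm, hab, hab.symm]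
  have eDaa : tm a a b b sc (-sc) a a = sc := by simp [tm, hab, hab.symm]
  have eDbb : tm a a b b sc (-sc) b b = -sc := by simp [tm, hab, hab.symm]
  -- inner products
  have hSS : h0Inner (tm a b b a sc sc) (tm a b b a sc sc) = 1 := by
    rw [h0Inner_tm, eSba, eSab,
      show sc * sc + sc * sc = (1:ℂ) by linear_combination 2 * hs2]
    exact Complex.one_re
  have hAA : h0Inner (tm a b b a (sc * Complex.I) (-(sc * Complex.I)))
      (tm a b b a (sc * Complex.I) (-(sc * Complex.I))) = 1 := by
    rw [h0Inner_tm, eAba, eAab,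
      show sc * Complex.I * -(sc * Complex.I) + -(sc * Complex.I) * (sc * Complex.I) = (1:ℂ) by
        linear_combination (-(2:ℂ) * Complex.I * Complex.I) * hs2 + (-1 : ℂ) * hI]
    exact Complex.one_re
  have hDD : h0Inner (tm a a b b sc (-sc)) (tm a a b b sc (-sc)) = 1 := by
    rw [h0Inner_tm, eDaa, eDbb,
      show sc * sc + -sc * -sc = (1:ℂ) by linear_combination 2 * hs2]
    exact Complex.one_re
  have hSA : h0Inner (tm a b b a sc sc)
      (tm a b b a (sc * Complex.I) (-(sc * Complex.I))) = 0 := by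
    rw [h0Inner_tm, eAba, eAab,
      show sc * -(sc * Complex.I) + sc * (sc * Complex.I) = (0:ℂ) by ring]
    exact Complex.zero_re
  have hDS : h0Inner (tm a a b b sc (-sc)) (tm a b b a sc sc) = 0 := by
    rw [h0Inner_tm, eSaa, eSbb]
    simp
  have hDA : h0Inner (tm a a b b sc (-sc))
      (tm a b b a (sc * Complex.I) (-(sc * Complex.I))) = 0 := by
    rw [h0Inner_tm, eAaa, eAbb]
    simp
  -- first inequality : 0 ≤ Re R a a b b
  have i1 := hT _ _ memS memA hSS hAA hSA
  rw [curvForm_tm, curvForm_tm, ← Complex.add_re] at i1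
  rw [show ((R b a b a * sc + R b a a b * sc) * sc + (R a b b a * sc + R a b a b * sc) * sc)
        + ((R b a b a * (sc * Complex.I) + R b a a b * -(sc * Complex.I)) * (sc * Complex.I)
          + (R a b b a * (sc * Complex.I) + R a b a b * -(sc * Complex.I)) * -(sc * Complex.I))
      = R a a b b + R a a b b by
    linear_combination (2 * (R b a a b + R a b b a)) * hs2
      + (sc * sc * (R b a b a - R b a a b - R a b b a + R a b a b)) * hI + e1 + e2 + e3] at i1
  have hre1 : 0 ≤ (R a a b b).re := by
    have := i1
    rw [Complex.add_re] at this
    linarith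
  -- second inequality : 0 ≤ Re R a a a a + Re R b b b b
  have i2 := hT _ _ memD memS hDD hSS hDS
  have i3 := hT _ _ memD memA hDD hAA hDA
  rw [curvForm_tm, curvForm_tm] at i2
  rw [curvForm_tm, curvForm_tm] at i3
  have i4 : (0:ℝ) ≤
      (((R a a a a * sc + R a a b b * -sc) * sc + (R b b a a * sc + R b b b b * -sc) * -sc)
        + ((R b a b a * sc + R b a a b * sc) * sc + (R a b b a * sc + R a b a b * sc) * sc)
        + (((R a a a a * sc + R a a b b * -sc) * sc + (R b b a a * sc + R b b b b * -sc) * -sc)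
          + ((R b a b a * (sc * Complex.I) + R b a a b * -(sc * Complex.I)) * (sc * Complex.I)
            + (R a b b a * (sc * Complex.I) + R a b a b * -(sc * Complex.I)) * -(sc * Complex.I)))).re := by
    simp only [Complex.add_re] at i2 i3 ⊢
    linarith
  rw [show (((R a a a a * sc + R a a b b * -sc) * sc + (R b b a a * sc + R b b b b * -sc) * -sc)
        + ((R b a b a * sc + R b a a b * sc) * sc + (R a b b a * sc + R a b a b * sc) * sc)
        + (((R a a a a * sc + R a a b b * -sc) * sc + (R b b a a * sc + R b b b b * -sc) * -sc)
          + ((R b a b a * (sc * Complex.I) + R b a a b * -(sc * Complex.I)) * (sc * Complex.I)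
            + (R a b b a * (sc * Complex.I) + R a b a b * -(sc * Complex.I)) * -(sc * Complex.I))))
      = R a a a a + R b b b b by
    linear_combination (2 * (R a a a a + R b b b b - R a a b b - R b b a a)
        + 2 * (R b a a b + R a b b a)) * hs2
      + (sc * sc * (R b a b a - R b a a b - R a b b a + R a b a b)) * hI + e1 + e2] at i4
  rw [Complex.add_re] at i4
  exact ⟨hre1, i4⟩

lemma scalar_eq (R : Fin n → Fin n → Fin n → Fin n → ℂ) :
    scalarCurv R = ∑ i, ∑ j, (R i i j j).re := by
  unfold scalarCurv ricci
  simp [Complex.re_sum]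

end HolSecAux

/-- From the case analysis in the proof of Theorem 1.2: there is a dimensional constant
`C n > 0` such that for every `n ≥ 3` and every Kähler curvature-type tensor with
2-nonnegative traceless bisectional curvature operator, each holomorphic sectional
curvature satisfies `|Re R(k,k,k,k)| ≤ C n · r`. -/
theorem holSec_bounded_by_scalar :
    ∃ C : ℕ → ℝ, (∀ n, 0 < C n) ∧
      ∀ (n : ℕ), 3 ≤ n → ∀ R : Fin n → Fin n → Fin n → Fin n → ℂ,
        IsKahlerCurvTensor R → TwoNonnegTBC R →
        ∀ k : Fin n, |(R k k k k).re| ≤ C n * scalarCurv R := by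
  classical
  refine ⟨fun n => (n : ℝ) + 1, fun n => by positivity, ?_⟩
  intro n hn R hK hT k
  have key1 : ∀ a b : Fin n, a ≠ b → 0 ≤ (R a a b b).re :=
    fun a b hab => (HolSecAux.pair_nonneg R hK hT hab).1
  have key2 : ∀ a b : Fin n, a ≠ b → 0 ≤ (R a a a a).re + (R b b b b).re :=
    fun a b hab => (HolSecAux.pair_nonneg R hK hT hab).2
  have hcast : (3:ℝ) ≤ (n:ℝ) := by exact_mod_cast hn
  set H : Fin n → ℝ := fun i => (R i i i i).re with hHdef
  set h : ℝ := ∑ i, H i with hhdef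
  set r : ℝ := scalarCurv R with hrdef
  have card_er : ∀ m : Fin n, (((Finset.univ.erase m)).card : ℝ) = (n:ℝ) - 1 := by
    intro m
    rw [Finset.card_erase_of_mem (Finset.mem_univ m), Finset.card_univ, Fintype.card_fin]
    have h1 : 1 ≤ n := by omega
    push_cast [Nat.cast_sub h1]
    ring
  have erase_sum : ∀ m : Fin n, ∑ i ∈ Finset.univ.erase m, H i = h - H m := by
    intro m
    have := Finset.add_sum_erase Finset.univ H (Finset.mem_univ m)
    rw [hhdef]
    linarith [this]
  -- r = h + (nonnegative off-diagonal part)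
  have hsplit : r = h + ∑ i, ∑ j ∈ Finset.univ.erase i, (R i i j j).re := by
    rw [hrdef, HolSecAux.scalar_eq, hhdef]
    rw [← Finset.sum_add_distrib]
    exact Finset.sum_congr rfl fun i _ =>
      (Finset.add_sum_erase Finset.univ (fun j => (R i i j j).re) (Finset.mem_univ i)).symm
  have hoff : 0 ≤ ∑ i, ∑ j ∈ Finset.univ.erase i, (R i i j j).re :=
    Finset.sum_nonneg fun i _ => Finset.sum_nonneg fun j hj =>
      key1 i j (Ne.symm (Finset.mem_erase.mp hj).1)
  have hhr : h ≤ r := by linarith [hsplit, hoff]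
  have hkey : ∀ m : Fin n, 0 ≤ ((n:ℝ) - 2) * H m + h := by
    intro m
    have h1 : 0 ≤ ∑ j ∈ Finset.univ.erase m, (H m + H j) :=
      Finset.sum_nonneg fun j hj => key2 m j (Ne.symm (Finset.mem_erase.mp hj).1)
    have h2 : ∑ j ∈ Finset.univ.erase m, (H m + H j)
        = ((n:ℝ) - 1) * H m + (h - H m) := by
      rw [Finset.sum_add_distrib, Finset.sum_const, nsmul_eq_mul, card_er, erase_sum]
    rw [h2] at h1
    linarith
  have hh0 : 0 ≤ h := by
    have h1 : 0 ≤ ∑ m : Fin n, (((n:ℝ) - 2) * H m + h) :=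
      Finset.sum_nonneg fun m _ => hkey m
    have h2 : ∑ m : Fin n, (((n:ℝ) - 2) * H m + h) = (2 * (n:ℝ) - 2) * h := by
      rw [Finset.sum_add_distrib, ← Finset.mul_sum, Finset.sum_const, Finset.card_univ,
        Fintype.card_fin, nsmul_eq_mul, ← hhdef]
      ring
    rw [h2] at h1
    nlinarith
  have hlow : ∀ m : Fin n, -h ≤ H m := by
    intro m
    rcases le_or_gt 0 (H m) with hp | hneg
    · linarith
    · have h1 := hkey m
      nlinarith [mul_nonneg (by linarith : (0:ℝ) ≤ (n:ℝ) - 3) (by linarith : (0:ℝ) ≤ -(H m))]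
  have hup : H k ≤ (n:ℝ) * h := by
    have h1 : ∑ i ∈ Finset.univ.erase k, (-h) ≤ ∑ i ∈ Finset.univ.erase k, H i :=
      Finset.sum_le_sum fun i _ => hlow i
    rw [Finset.sum_const, nsmul_eq_mul, card_er, erase_sum] at h1
    nlinarith
  have hr0 : 0 ≤ r := le_trans hh0 hhr
  have hnr : (n:ℝ) * h ≤ (n:ℝ) * r :=
    mul_le_mul_of_nonneg_left hhr (by linarith)
  have habs : |H k| ≤ ((n:ℝ) + 1) * r := by
    rw [abs_le]
    constructor
    · nlinarith [hlow k]
    · nlinarith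
  exact habs
end

section
/- Let n ≥ 2 and let R be a Kähler curvature-type tensor on ℂ^n whose traceless bisectional curvature operator is 2-nonnegative. Then Re(R(i,i,i,i)) + Re(R(j,j,j,j)) ≥ 0 for all indices i ≠ j; consequently Σ_{k=1}^n Re(R(k,k,k,k)) ≥ 0 and the scalar curvature satisfies r ≥ 0. -/
/-! Test 2-nonnegativity on the triple `η = E_ii - E_jj`, `σ = E_ij + E_ji`,
`ρ = √-1 (E_ij - E_ji)` in `H₀` (pairwise orthogonal, each of squared norm 2, so each pair
is orthonormal after rescaling). Using `R(i,j,k,l) = R(k,j,i,l)`, the terms `R(i,j,i,j)` cancel in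
`(ℛ(η,η) + ℛ(σ,σ)) + (ℛ(η,η) + ℛ(ρ,ρ)) = 2 Re (R(i,i,i,i) + R(j,j,j,j))`, and
`ℛ(σ,σ) + ℛ(ρ,ρ) = 2 Re (R(i,i,j,j) + R(j,j,i,i))`. Summing the first over ordered pairs `i ≠ j`
gives `2 (n - 1) Σ_k Re R(k,k,k,k) ≥ 0`; the scalar curvature `Σ_{i,k} Re R(i,i,k,k)` is that
diagonal sum plus off-diagonal terms which pair up into instances of the second inequality. -/

open BigOperators

open Matrix

namespace Finset

variable {ι : Type*} [Fintype ι]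

theorem sum_diag_le_sum_sum {M : Type*} [AddCommMonoid M] [PartialOrder M]
    [IsOrderedAddMonoid M] (f : ι → ι → M) (h : ∀ i j, i ≠ j → 0 ≤ f i j) :
    ∑ i, f i i ≤ ∑ i, ∑ j, f i j := by
  classical
  refine sum_le_sum fun i _ => ?_
  rw [← add_sum_erase _ _ (mem_univ i)]
  exact le_add_of_nonneg_right (sum_nonneg fun j hj => h i j (ne_of_mem_erase hj).symm)

variable {K : Type*} [CommRing K] [LinearOrder K] [IsStrictOrderedRing K]

theorem sum_nonneg_of_pairwise_add_nonneg (hι : 2 ≤ Fintype.card ι) (f : ι → K)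
    (h : ∀ i j, i ≠ j → 0 ≤ f i + f j) : 0 ≤ ∑ i, f i := by
  have key := sum_diag_le_sum_sum (fun i j => f i + f j) h
  simp only [sum_add_distrib, sum_const, card_univ, nsmul_eq_mul, ← mul_sum] at key
  have hι' : (2 : K) ≤ Fintype.card ι := by exact_mod_cast hι
  nlinarith

theorem sum_sum_nonneg_of_add_swap_nonneg (f : ι → ι → K) (hdiag : 0 ≤ ∑ i, f i i)
    (hoff : ∀ i j, i ≠ j → 0 ≤ f i j + f j i) : 0 ≤ ∑ i, ∑ j, f i j := by
  have key := sum_diag_le_sum_sum (fun i j => f i j + f j i) hoff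
  simp only [sum_add_distrib] at key
  rw [sum_comm (f := fun i j => f j i)] at key
  linarith

end Finset

section BilinearForms

variable {n : ℕ}

lemma curvForm_smul_smul (R : Fin n → Fin n → Fin n → Fin n → ℂ) (c d : ℝ)
    (η τ : Matrix (Fin n) (Fin n) ℂ) :
    curvForm R (c • η) (d • τ) = c * d * curvForm R η τ := by
  simp only [curvForm, Matrix.smul_apply, Complex.real_smul, ← Complex.re_ofReal_mul,
    Finset.mul_sum]
  congr 1
  refine Finset.sum_congr rfl fun _ _ => Finset.sum_congr rfl fun _ _ =>
    Finset.sum_congr rfl fun _ _ => Finset.sum_congr rfl fun _ _ => ?_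
  push_cast; ring

lemma curvForm_add_left (R : Fin n → Fin n → Fin n → Fin n → ℂ)
    (η η' τ : Matrix (Fin n) (Fin n) ℂ) :
    curvForm R (η + η') τ = curvForm R η τ + curvForm R η' τ := by
  simp only [curvForm, Matrix.add_apply, mul_add, add_mul, Finset.sum_add_distrib, Complex.add_re]

lemma curvForm_add_right (R : Fin n → Fin n → Fin n → Fin n → ℂ)
    (η τ τ' : Matrix (Fin n) (Fin n) ℂ) :
    curvForm R η (τ + τ') = curvForm R η τ + curvForm R η τ' := by
  simp only [curvForm, Matrix.add_apply, mul_add, Finset.sum_add_distrib, Complex.add_re]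

lemma curvForm_single_single (R : Fin n → Fin n → Fin n → Fin n → ℂ) (a b a' b' : Fin n)
    (x x' : ℂ) :
    curvForm R (single a b x) (single a' b' x') = (R b a b' a' * x * x').re := by
  simp [curvForm, single, ite_and, mul_ite, ite_mul]

lemma h0Inner_smul_smul (c d : ℝ) (η τ : Matrix (Fin n) (Fin n) ℂ) :
    h0Inner (c • η) (d • τ) = c * d * h0Inner η τ := by
  simp only [h0Inner, smul_mul_smul_comm, trace_smul, Complex.smul_re, smul_eq_mul]

lemma h0Inner_add_left (η η' τ : Matrix (Fin n) (Fin n) ℂ) :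
    h0Inner (η + η') τ = h0Inner η τ + h0Inner η' τ := by
  simp only [h0Inner, add_mul, trace_add, Complex.add_re]

lemma h0Inner_add_right (η τ τ' : Matrix (Fin n) (Fin n) ℂ) :
    h0Inner η (τ + τ') = h0Inner η τ + h0Inner η τ' := by
  simp only [h0Inner, mul_add, trace_add, Complex.add_re]

lemma h0Inner_single_single (a b a' b' : Fin n) (x x' : ℂ) :
    h0Inner (single a b x) (single a' b' x') = if b = a' ∧ b' = a then (x * x').re else 0 := by
  simp only [h0Inner, trace_single_mul, single_apply, smul_eq_mul, mul_ite, mul_zero,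
    eq_comm (a := a')]
  split_ifs <;> simp

lemma MemH0.smul {η : Matrix (Fin n) (Fin n) ℂ} (h : MemH0 η) (c : ℝ) : MemH0 (c • η) :=
  ⟨h.1.smul (IsSelfAdjoint.all c), by rw [trace_smul, h.2, smul_zero]⟩

end BilinearForms

section TestMatrices

variable {n : ℕ} (i j : Fin n)

def diagDiff : Matrix (Fin n) (Fin n) ℂ := single i i 1 + single j j (-1)

def offDiagSym : Matrix (Fin n) (Fin n) ℂ := single i j 1 + single j i 1

def offDiagSkew : Matrix (Fin n) (Fin n) ℂ := single i j Complex.I + single j i (-Complex.I)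

variable {i j}

lemma memH0_diagDiff : MemH0 (diagDiff i j) := by
  constructor
  · simp [IsHermitian, diagDiff]
  · simp [diagDiff]

lemma memH0_offDiagSym (hij : i ≠ j) : MemH0 (offDiagSym i j) := by
  constructor
  · simp [IsHermitian, offDiagSym, add_comm]
  · simp [offDiagSym, hij, hij.symm]

lemma memH0_offDiagSkew (hij : i ≠ j) : MemH0 (offDiagSkew i j) := by
  constructor
  · simp [IsHermitian, offDiagSkew, add_comm]
  · simp [offDiagSkew, hij, hij.symm]

lemma h0Inner_diagDiff_self (hij : i ≠ j) : h0Inner (diagDiff i j) (diagDiff i j) = 2 := by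
  norm_num [diagDiff, h0Inner_add_left, h0Inner_add_right, h0Inner_single_single, hij, hij.symm]

lemma h0Inner_offDiagSym_self (hij : i ≠ j) :
    h0Inner (offDiagSym i j) (offDiagSym i j) = 2 := by
  norm_num [offDiagSym, h0Inner_add_left, h0Inner_add_right, h0Inner_single_single, hij, hij.symm]

lemma h0Inner_offDiagSkew_self (hij : i ≠ j) :
    h0Inner (offDiagSkew i j) (offDiagSkew i j) = 2 := by
  norm_num [offDiagSkew, h0Inner_add_left, h0Inner_add_right, h0Inner_single_single, hij, hij.symm]

lemma h0Inner_diagDiff_offDiagSym (hij : i ≠ j) :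
    h0Inner (diagDiff i j) (offDiagSym i j) = 0 := by
  simp [diagDiff, offDiagSym, h0Inner_add_left, h0Inner_add_right, h0Inner_single_single, hij,
    hij.symm]

lemma h0Inner_diagDiff_offDiagSkew (hij : i ≠ j) :
    h0Inner (diagDiff i j) (offDiagSkew i j) = 0 := by
  simp [diagDiff, offDiagSkew, h0Inner_add_left, h0Inner_add_right, h0Inner_single_single, hij,
    hij.symm]

lemma h0Inner_offDiagSym_offDiagSkew (hij : i ≠ j) :
    h0Inner (offDiagSym i j) (offDiagSkew i j) = 0 := by
  simp [offDiagSym, offDiagSkew, h0Inner_add_left, h0Inner_add_right, h0Inner_single_single, hij,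
    hij.symm]

variable (R : Fin n → Fin n → Fin n → Fin n → ℂ)

lemma curvForm_diagDiff : curvForm R (diagDiff i j) (diagDiff i j)
    = (R i i i i).re - (R i i j j).re - (R j j i i).re + (R j j j j).re := by
  simp only [diagDiff, curvForm_add_left, curvForm_add_right, curvForm_single_single, mul_one,
    mul_neg, neg_neg, Complex.neg_re]
  ring

lemma curvForm_offDiagSym : curvForm R (offDiagSym i j) (offDiagSym i j)
    = (R j i j i).re + (R j i i j).re + (R i j j i).re + (R i j i j).re := by
  simp only [offDiagSym, curvForm_add_left, curvForm_add_right, curvForm_single_single, mul_one]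
  ring

lemma curvForm_offDiagSkew : curvForm R (offDiagSkew i j) (offDiagSkew i j)
    = -(R j i j i).re + (R j i i j).re + (R i j j i).re - (R i j i j).re := by
  simp only [offDiagSkew, curvForm_add_left, curvForm_add_right, curvForm_single_single,
    mul_neg, neg_mul, neg_neg, mul_assoc, Complex.I_mul_I, mul_one, Complex.neg_re]
  ring

end TestMatrices

namespace TwoNonnegTBC

variable {n : ℕ} {R : Fin n → Fin n → Fin n → Fin n → ℂ} {i j : Fin n}

theorem add_nonneg_of_orthogonal (h2 : TwoNonnegTBC R) {η τ : Matrix (Fin n) (Fin n) ℂ}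
    (hη : MemH0 η) (hτ : MemH0 τ) {s : ℝ} (hs : 0 < s) (hηη : h0Inner η η = s)
    (hττ : h0Inner τ τ = s) (hητ : h0Inner η τ = 0) :
    0 ≤ curvForm R η η + curvForm R τ τ := by
  set c := (√s)⁻¹
  have hc : c * c * s = 1 := by
    rw [← mul_inv, Real.mul_self_sqrt hs.le, inv_mul_cancel₀ hs.ne']
  have h := h2 (c • η) (c • τ) (hη.smul c) (hτ.smul c)
    (by rw [h0Inner_smul_smul, hηη, hc]) (by rw [h0Inner_smul_smul, hττ, hc])
    (by rw [h0Inner_smul_smul, hητ, mul_zero])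
  rw [curvForm_smul_smul, curvForm_smul_smul, ← mul_add] at h
  exact nonneg_of_mul_nonneg_right h (by positivity)

theorem holSec_add_holSec_nonneg (h2 : TwoNonnegTBC R)
    (hR : ∀ i j k l, R i j k l = R k j i l) (hij : i ≠ j) :
    0 ≤ (R i i i i).re + (R j j j j).re := by
  have hησ := h2.add_nonneg_of_orthogonal memH0_diagDiff (memH0_offDiagSym hij) two_pos
    (h0Inner_diagDiff_self hij) (h0Inner_offDiagSym_self hij) (h0Inner_diagDiff_offDiagSym hij)
  have hηρ := h2.add_nonneg_of_orthogonal memH0_diagDiff (memH0_offDiagSkew hij) two_pos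
    (h0Inner_diagDiff_self hij) (h0Inner_offDiagSkew_self hij) (h0Inner_diagDiff_offDiagSkew hij)
  rw [curvForm_diagDiff, curvForm_offDiagSym, hR j i i j, hR i j j i] at hησ
  rw [curvForm_diagDiff, curvForm_offDiagSkew, hR j i i j, hR i j j i] at hηρ
  linarith

theorem bisec_add_bisec_nonneg (h2 : TwoNonnegTBC R)
    (hR : ∀ i j k l, R i j k l = R k j i l) (hij : i ≠ j) :
    0 ≤ (R i i j j).re + (R j j i i).re := by
  have hσρ := h2.add_nonneg_of_orthogonal (memH0_offDiagSym hij) (memH0_offDiagSkew hij) two_pos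
    (h0Inner_offDiagSym_self hij) (h0Inner_offDiagSkew_self hij)
    (h0Inner_offDiagSym_offDiagSkew hij)
  rw [curvForm_offDiagSym, curvForm_offDiagSkew, hR j i i j, hR i j j i] at hσρ
  linarith

end TwoNonnegTBC

/-- From the case analysis in the proof of Theorem 1.2: under 2-nonnegativity of the
traceless bisectional curvature operator, `Re R(i,i,i,i) + Re R(j,j,j,j) ≥ 0` for `i ≠ j`;
consequently the sum of the holomorphic sectional curvatures and the scalar curvature are
nonnegative. -/
theorem holSec_pair_sum_nonneg_of_twoNonnegTBC (n : ℕ) (hn : 2 ≤ n)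
    (R : Fin n → Fin n → Fin n → Fin n → ℂ)
    (hR : IsKahlerCurvTensor R) (h2 : TwoNonnegTBC R) :
    (∀ i j : Fin n, i ≠ j → 0 ≤ (R i i i i).re + (R j j j j).re) ∧
    0 ≤ ∑ k, (R k k k k).re ∧ 0 ≤ scalarCurv R := by
  have hpair (i j : Fin n) (hij : i ≠ j) : 0 ≤ (R i i i i).re + (R j j j j).re :=
    h2.holSec_add_holSec_nonneg hR.1 hij
  have hsum : 0 ≤ ∑ k, (R k k k k).re :=
    Finset.sum_nonneg_of_pairwise_add_nonneg (by simpa using hn) _ hpair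
  refine ⟨hpair, hsum, ?_⟩
  simp only [scalarCurv, ricci, Complex.re_sum]
  exact Finset.sum_sum_nonneg_of_add_swap_nonneg _ hsum fun i j hij =>
    h2.bisec_add_bisec_nonneg hR.1 hij
end

section
/- Let n ≥ 2 and let S : Fin n × Fin n × Fin n × Fin n → ℂ satisfy the pair symmetry S(i,j,k,l) = S(k,l,i,j) and the trace-free condition Σ_a S(a,a,c,d) = 0 for all c, d. If Σ_{i,j,k,l} S(i,j,k,l)·η(j,i)·τ(l,k) = 0 for all trace-zero Hermitian n×n matrices η, τ, then S(i,j,k,l) = 0 for all indices. -/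
/-!
Traceless Hermitian matrices detect traceless complex matrices: a traceless `A` is
`ℜ A + I • ℑ A` with both parts Hermitian and traceless, and a traceless `T` with `tr (T A) = 0`
for every traceless `A` has `tr (T A) = 0` for every `A`, hence is zero. Apply this first to the
contraction of `S` with a traceless Hermitian `τ` over its second index pair (traceless because
`S` is trace-free in its first pair), and then to each slice `S i j`, which is traceless by the
pair symmetry.
-/

namespace Matrix

variable {ι : Type*} [Fintype ι]

theorem eq_zero_of_trace_mul_eq_zero_of_trace_eq_zero {R : Type*} [Field R] [CharZero R]
    [DecidableEq ι] {T : Matrix ι ι R} (hT : T.trace = 0)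
    (h : ∀ A : Matrix ι ι R, A.trace = 0 → (T * A).trace = 0) : T = 0 := by
  rcases isEmpty_or_nonempty ι with _ | _
  · exact Subsingleton.elim _ _
  refine ext_iff_trace_mul_right.mpr fun A => ?_
  have hcard : (Fintype.card ι : R) ≠ 0 := Nat.cast_ne_zero.mpr Fintype.card_ne_zero
  -- `card ι • A - trace A • 1` is traceless, and `T` pairs with it as `card ι • A`.
  have key := h ((Fintype.card ι : R) • A - A.trace • 1) (by simp [mul_comm])
  simp only [mul_sub, mul_smul_comm, mul_one, trace_sub, trace_smul, hT, smul_eq_mul, mul_zero,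
    sub_zero] at key
  simpa using (mul_eq_zero.mp key).resolve_left hcard

theorem trace_mul_eq_zero_of_forall_isHermitian {T : Matrix ι ι ℂ}
    (h : ∀ τ : Matrix ι ι ℂ, τ.IsHermitian → τ.trace = 0 → (T * τ).trace = 0)
    {A : Matrix ι ι ℂ} (hA : A.trace = 0) : (T * A).trace = 0 := by
  rw [← realPart_add_I_smul_imaginaryPart A, mul_add, mul_smul_comm, trace_add, trace_smul,
    h _ (realPart A).2 (by simp [realPart_apply_coe, star_eq_conjTranspose, hA]),
    h _ (imaginaryPart A).2 (by simp [imaginaryPart_apply_coe, star_eq_conjTranspose, hA]),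
    smul_zero, add_zero]

theorem eq_zero_of_trace_mul_isHermitian_eq_zero [DecidableEq ι] {T : Matrix ι ι ℂ}
    (hT : T.trace = 0)
    (h : ∀ τ : Matrix ι ι ℂ, τ.IsHermitian → τ.trace = 0 → (T * τ).trace = 0) : T = 0 :=
  eq_zero_of_trace_mul_eq_zero_of_trace_eq_zero hT fun _ =>
    trace_mul_eq_zero_of_forall_isHermitian h

variable {R : Type*} [CommSemiring R]

/-- `contractSnd S τ i j = ∑ k l, S i j k l * τ l k`. -/
def contractSnd (S : ι → ι → ι → ι → R) (τ : Matrix ι ι R) : Matrix ι ι R :=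
  of fun i j => (of (S i j) * τ).trace

theorem trace_contractSnd_eq_zero {S : ι → ι → ι → ι → R} (hS : ∀ k l, ∑ a, S a a k l = 0)
    (τ : Matrix ι ι R) : (contractSnd S τ).trace = 0 :=
  calc (contractSnd S τ).trace = ∑ k, ∑ l, (∑ a, S a a k l) * τ l k := by
        simp only [contractSnd, trace, diag_apply, mul_apply, of_apply, Finset.sum_mul]
        rw [Finset.sum_comm]
        exact Finset.sum_congr rfl fun _ _ => Finset.sum_comm
    _ = 0 := by simp only [hS, zero_mul, Finset.sum_const_zero]

theorem trace_contractSnd_mul (S : ι → ι → ι → ι → R) (τ η : Matrix ι ι R) :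
    (contractSnd S τ * η).trace = ∑ i, ∑ j, ∑ k, ∑ l, S i j k l * η j i * τ l k := by
  simp only [contractSnd, trace, diag_apply, mul_apply, of_apply, Finset.sum_mul,
    mul_right_comm _ (τ _ _)]

end Matrix

open Matrix

theorem traceless_tensor_eq_zero_of_form_eq_zero_general (n : ℕ)
    (S : Fin n → Fin n → Fin n → Fin n → ℂ)
    (hpair : ∀ i j k l, S i j k l = S k l i j)
    (htr : ∀ c d : Fin n, ∑ a, S a a c d = 0)
    (hvanish : ∀ η τ : Matrix (Fin n) (Fin n) ℂ, η.IsHermitian → τ.IsHermitian →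
      η.trace = 0 → τ.trace = 0 →
      (∑ i, ∑ j, ∑ k, ∑ l, S i j k l * η j i * τ l k) = 0) :
    ∀ i j k l, S i j k l = 0 := by
  have hcontract : ∀ τ : Matrix (Fin n) (Fin n) ℂ, τ.IsHermitian → τ.trace = 0 →
      contractSnd S τ = 0 := fun τ hτ hτ₀ =>
    eq_zero_of_trace_mul_isHermitian_eq_zero (trace_contractSnd_eq_zero htr τ)
      fun η hη hη₀ => by rw [trace_contractSnd_mul]; exact hvanish η τ hη hτ hη₀ hτ₀
  intro i j
  have hslice : of (S i j) = 0 :=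
    eq_zero_of_trace_mul_isHermitian_eq_zero
      (by simpa only [trace, diag_apply, of_apply, hpair i j] using htr i j)
      fun τ hτ hτ₀ => congrFun₂ (hcontract τ hτ hτ₀) i j
  exact congrFun₂ hslice

/-- Part (2) of the proof of Theorem 1.2: a 4-index tensor `S` on `ℂ^n` with the pair
symmetry `S(i,j,k,l) = S(k,l,i,j)` and trace-free in its first pair of indices, whose
bilinear form vanishes on all pairs of trace-zero Hermitian matrices, is identically zero. -/
theorem traceless_tensor_eq_zero_of_form_eq_zero (n : ℕ) (hn : 2 ≤ n)
    (S : Fin n → Fin n → Fin n → Fin n → ℂ)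
    (hpair : ∀ i j k l, S i j k l = S k l i j)
    (htr : ∀ c d : Fin n, ∑ a, S a a c d = 0)
    (hvanish : ∀ η τ : Matrix (Fin n) (Fin n) ℂ, η.IsHermitian → τ.IsHermitian →
      η.trace = 0 → τ.trace = 0 →
      (∑ i, ∑ j, ∑ k, ∑ l, S i j k l * η j i * τ l k) = 0) :
    ∀ i j k l, S i j k l = 0 :=
  traceless_tensor_eq_zero_of_form_eq_zero_general n S hpair htr hvanish
end

section
/- There exists a constant C > 0 depending only on n with the following property: for every n ≥ 2 and every tensor S : Fin n × Fin n × Fin n × Fin n → ℂ satisfying the pair symmetry S(i,j,k,l) = S(k,l,i,j), the reality condition conj(S(i,j,k,l)) = S(j,i,l,k), and the trace-free condition Σ_a S(a,a,c,d) = 0 for all c, d, one has |S(i,j,k,l)| ≤ C · sup { |Σ_{a,b,c,d} S(a,b,c,d)·η(b,a)·η(d,c)| : η ∈ H₀, ⟨η,η⟩ = 1 } for all indices i, j, k, l. -/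
/-!
Write `S(η, τ) = ∑ S a b c d η b a τ d c`. Pair symmetry makes this complex bilinear form
symmetric, so polarization `4 S(η, τ) = S(η + τ, η + τ) - S(η - τ, η - τ)` together with the
parallelogram law bounds it on traceless Hermitian matrices by `M / 2 (‖η‖² + ‖τ‖²)`, where `M`
is the supremum of the quadratic form on the unit sphere and `‖·‖` is the Frobenius norm.
Splitting a traceless matrix into its Hermitian real and imaginary parts extends the bound,
with constant `M`, to all traceless matrices. Finally `S i j k l = S(E_ji, E_lk)` for the
matrix units, and since the trace-free condition kills `S(1, ·)` and `S(·, 1)`, the matrix units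
may be replaced by their traceless parts, whose Frobenius norm is at most `1`. Hence
`‖S i j k l‖ ≤ 2 M`.
-/

open Matrix ComplexStarModule

variable {ι : Type*} [Fintype ι]

theorem sum_comm_pairs {M : Type*} [AddCommMonoid M] (F : ι → ι → ι → ι → M) :
    ∑ a, ∑ b, ∑ c, ∑ d, F a b c d = ∑ c, ∑ d, ∑ a, ∑ b, F a b c d :=
  (Finset.sum_congr rfl fun _ _ => Finset.sum_comm).trans <| Finset.sum_comm.trans <|
    Finset.sum_congr rfl fun _ _ => (Finset.sum_congr rfl fun _ _ => Finset.sum_comm).trans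
      Finset.sum_comm

section FrobeniusNorm

theorem re_trace_conjTranspose_mul_self {m n : Type*} [Fintype m] [Fintype n]
    (η : Matrix m n ℂ) : (ηᴴ * η).trace.re = ∑ a, ∑ b, ‖η a b‖ ^ 2 := by
  simp only [trace, diag, mul_apply, conjTranspose_apply, Complex.re_sum, Complex.star_def,
    Complex.conj_mul']
  norm_cast
  exact Finset.sum_comm

theorem sq_norm_apply_le_re_trace_conjTranspose_mul_self {m n : Type*} [Fintype m] [Fintype n]
    (η : Matrix m n ℂ) (a : m) (b : n) : ‖η a b‖ ^ 2 ≤ (ηᴴ * η).trace.re := by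
  rw [re_trace_conjTranspose_mul_self]
  exact (Finset.single_le_sum (fun b _ => by positivity) (Finset.mem_univ b)).trans
    (Finset.single_le_sum (f := fun a => ∑ b, ‖η a b‖ ^ 2) (fun a _ => by positivity)
      (Finset.mem_univ a))

theorem trace_conjTranspose_mul_self_add_I_smul {P R : Matrix ι ι ℂ} (hP : P.IsHermitian)
    (hR : R.IsHermitian) :
    ((P + Complex.I • R)ᴴ * (P + Complex.I • R)).trace = (P * P).trace + (R * R).trace := by
  simp only [conjTranspose_add, conjTranspose_smul, hP.eq, hR.eq, Complex.star_def,
    Complex.conj_I, add_mul, mul_add, smul_mul_assoc, mul_smul_comm, trace_add, trace_smul,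
    trace_mul_comm R P, smul_eq_mul]
  linear_combination (-(R * R).trace) * Complex.I_sq

theorem exists_isHermitian_add_I_smul {Z : Matrix ι ι ℂ} (hZ : Z.trace = 0) :
    ∃ P R : Matrix ι ι ℂ, P.IsHermitian ∧ R.IsHermitian ∧ P.trace = 0 ∧ R.trace = 0 ∧
      Z = P + Complex.I • R := by
  refine ⟨ℜ Z, ℑ Z, (ℜ Z).prop, (ℑ Z).prop, ?_, ?_, (realPart_add_I_smul_imaginaryPart Z).symm⟩
  · simp [realPart_apply_coe, star_eq_conjTranspose, trace_conjTranspose, hZ]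
  · simp [imaginaryPart_apply_coe, star_eq_conjTranspose, trace_conjTranspose, hZ]

variable [DecidableEq ι]

theorem trace_sub_trace_div_card_smul_one (X : Matrix ι ι ℂ) :
    (X - (X.trace / Fintype.card ι) • 1).trace = 0 := by
  rcases isEmpty_or_nonempty ι with hι | hι
  · simp [trace]
  · rw [trace_sub, trace_smul, trace_one, smul_eq_mul, div_mul_cancel₀ _ (by simp), sub_self]

theorem re_trace_conjTranspose_mul_self_sub_trace_div_card_smul_one_le (X : Matrix ι ι ℂ) :
    ((X - (X.trace / Fintype.card ι) • 1)ᴴ * (X - (X.trace / Fintype.card ι) • 1)).trace.re ≤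
      (Xᴴ * X).trace.re := by
  rcases isEmpty_or_nonempty ι with hι | hι
  · simp [trace]
  have hn : (Fintype.card ι : ℂ) ≠ 0 := by simp
  have hpythagoras :
      ((X - (X.trace / Fintype.card ι) • 1)ᴴ * (X - (X.trace / Fintype.card ι) • 1)).trace =
        (Xᴴ * X).trace - ((‖X.trace‖ ^ 2 / Fintype.card ι : ℝ) : ℂ) := by
    simp only [conjTranspose_sub, conjTranspose_smul, conjTranspose_one, sub_mul, mul_sub,
      smul_mul_assoc, mul_smul_comm, one_mul, mul_one, trace_sub, trace_smul, trace_one,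
      trace_conjTranspose, smul_eq_mul, star_div₀, Complex.star_def, map_natCast]
    push_cast
    rw [← Complex.conj_mul']
    field_simp
    ring
  rw [hpythagoras, Complex.sub_re, Complex.ofReal_re, sub_le_self_iff]
  positivity

theorem trace_conjTranspose_single_mul_single (i j : ι) :
    ((single i j (1 : ℂ))ᴴ * single i j 1).trace = 1 := by
  rw [conjTranspose_single, star_one, single_mul_single_same, mul_one, trace_single_eq_same]

end FrobeniusNorm

noncomputable def tensorBilin (S : ι → ι → ι → ι → ℂ) :
    Matrix ι ι ℂ →ₗ[ℂ] Matrix ι ι ℂ →ₗ[ℂ] ℂ :=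
  LinearMap.mk₂ ℂ (fun η τ => ∑ a, ∑ b, ∑ c, ∑ d, S a b c d * η b a * τ d c)
    (fun η η' τ => by simp only [Matrix.add_apply, mul_add, add_mul, Finset.sum_add_distrib])
    (fun z η τ => by
      simp only [Matrix.smul_apply, smul_eq_mul, Finset.mul_sum, mul_assoc, mul_left_comm z])
    (fun η τ τ' => by simp only [Matrix.add_apply, mul_add, Finset.sum_add_distrib])
    (fun z η τ => by
      simp only [Matrix.smul_apply, smul_eq_mul, Finset.mul_sum, mul_assoc, mul_left_comm z])

section TensorBilin

variable (S : ι → ι → ι → ι → ℂ)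

theorem tensorBilin_apply (η τ : Matrix ι ι ℂ) :
    tensorBilin S η τ = ∑ a, ∑ b, ∑ c, ∑ d, S a b c d * η b a * τ d c := rfl

theorem tensorBilin_comm (hsym : ∀ i j k l, S i j k l = S k l i j) (η τ : Matrix ι ι ℂ) :
    tensorBilin S η τ = tensorBilin S τ η := by
  simp only [tensorBilin_apply]
  rw [sum_comm_pairs]
  refine Finset.sum_congr rfl fun a _ => Finset.sum_congr rfl fun b _ =>
    Finset.sum_congr rfl fun c _ => Finset.sum_congr rfl fun d _ => ?_
  rw [hsym]
  ring

theorem tensorBilin_one_right [DecidableEq ι] (htr : ∀ a b, ∑ c, S a b c c = 0)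
    (η : Matrix ι ι ℂ) : tensorBilin S η 1 = 0 := by
  simp only [tensorBilin_apply, one_apply, mul_ite, mul_one, mul_zero, Finset.sum_ite_eq',
    Finset.mem_univ, if_true, ← Finset.sum_mul, htr, zero_mul, Finset.sum_const_zero]

theorem tensorBilin_sub_smul_one [DecidableEq ι] (hsym : ∀ i j k l, S i j k l = S k l i j)
    (htr : ∀ c d, ∑ a, S a a c d = 0) (X Y : Matrix ι ι ℂ) (x y : ℂ) :
    tensorBilin S (X - x • 1) (Y - y • 1) = tensorBilin S X Y := by
  have hone : ∀ Z, tensorBilin S Z 1 = 0 :=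
    tensorBilin_one_right S fun a b => by simp only [hsym a b, htr]
  simp only [map_sub, map_smul, LinearMap.sub_apply, LinearMap.smul_apply, hone,
    tensorBilin_comm S hsym 1, smul_zero, sub_zero]

theorem tensorBilin_single_single [DecidableEq ι] (i j k l : ι) :
    tensorBilin S (single j i 1) (single l k 1) = S i j k l := by
  simp [tensorBilin_apply, single, ite_and, mul_ite, Finset.sum_ite_eq]

theorem bddAbove_norm_tensorBilin_self :
    BddAbove ((fun η => ‖tensorBilin S η η‖) '' {η | (ηᴴ * η).trace.re ≤ 1}) := by
  refine ⟨∑ a, ∑ b, ∑ c, ∑ d, ‖S a b c d‖, ?_⟩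
  rintro _ ⟨η, hη, rfl⟩
  have hentry : ∀ a b, ‖η a b‖ ≤ 1 := fun a b =>
    (pow_le_one_iff_of_nonneg (norm_nonneg _) two_ne_zero).1
      ((sq_norm_apply_le_re_trace_conjTranspose_mul_self η a b).trans hη)
  refine (norm_sum_le _ _).trans <| Finset.sum_le_sum fun a _ => (norm_sum_le _ _).trans <|
    Finset.sum_le_sum fun b _ => (norm_sum_le _ _).trans <|
    Finset.sum_le_sum fun c _ => (norm_sum_le _ _).trans <| Finset.sum_le_sum fun d _ => ?_
  calc ‖S a b c d * η b a * η d c‖ = ‖S a b c d‖ * ‖η b a‖ * ‖η d c‖ := by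
        rw [norm_mul, norm_mul]
    _ ≤ ‖S a b c d‖ * 1 * 1 := by gcongr <;> exact hentry _ _
    _ = ‖S a b c d‖ := by ring

end TensorBilin

section QuadraticBound

variable {S : ι → ι → ι → ι → ℂ} {M : ℝ}

theorem norm_tensorBilin_self_le
    (hM : ∀ η : Matrix ι ι ℂ, η.IsHermitian → η.trace = 0 → (η * η).trace.re = 1 →
      ‖tensorBilin S η η‖ ≤ M)
    {η : Matrix ι ι ℂ} (hη : η.IsHermitian) (hη₀ : η.trace = 0) :
    ‖tensorBilin S η η‖ ≤ M * (η * η).trace.re := by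
  obtain rfl | hne := eq_or_ne η 0
  · simp
  obtain ⟨a, b, hab⟩ : ∃ a b, η a b ≠ 0 := by
    by_contra! h
    exact hne (Matrix.ext h)
  set t := (η * η).trace.re
  have ht : 0 < t := by
    have := sq_norm_apply_le_re_trace_conjTranspose_mul_self η a b
    rw [hη.eq] at this
    exact (pow_pos (norm_pos_iff.2 hab) 2).trans_le this
  set c : ℝ := (√t)⁻¹
  have hc : c * c = t⁻¹ := by rw [← mul_inv, Real.mul_self_sqrt ht.le]
  have hunit := hM (c • η) ((IsSelfAdjoint.all c).smul hη) (by simp [hη₀]) (by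
    rw [smul_mul_assoc, mul_smul_comm, smul_smul, trace_smul, Complex.smul_re, smul_eq_mul, hc,
      inv_mul_cancel₀ ht.ne'])
  rw [LinearMap.map_smul_of_tower, LinearMap.map_smul_of_tower, LinearMap.smul_apply,
    norm_smul, norm_smul, Real.norm_eq_abs, abs_of_nonneg (by positivity), ← mul_assoc,
    hc] at hunit
  exact (inv_mul_le_iff₀ ht).1 hunit |>.trans_eq (mul_comm _ _)

theorem norm_tensorBilin_le_of_isHermitian (hsym : ∀ i j k l, S i j k l = S k l i j)
    (hM : ∀ η : Matrix ι ι ℂ, η.IsHermitian → η.trace = 0 → (η * η).trace.re = 1 →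
      ‖tensorBilin S η η‖ ≤ M)
    {η τ : Matrix ι ι ℂ} (hη : η.IsHermitian) (hτ : τ.IsHermitian) (hη₀ : η.trace = 0)
    (hτ₀ : τ.trace = 0) :
    ‖tensorBilin S η τ‖ ≤ M / 2 * ((η * η).trace.re + (τ * τ).trace.re) := by
  have hpolar : 4 * tensorBilin S η τ =
      tensorBilin S (η + τ) (η + τ) - tensorBilin S (η - τ) (η - τ) := by
    simp only [map_add, map_sub, LinearMap.add_apply, LinearMap.sub_apply,
      tensorBilin_comm S hsym τ η]
    ring
  have hparallelogram : ((η + τ) * (η + τ)).trace.re + ((η - τ) * (η - τ)).trace.re =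
      2 * ((η * η).trace.re + (τ * τ).trace.re) := by
    simp only [add_mul, mul_add, sub_mul, mul_sub, trace_add, trace_sub, Complex.add_re,
      Complex.sub_re]
    ring
  have hplus := norm_tensorBilin_self_le hM (hη.add hτ) (by rw [trace_add, hη₀, hτ₀, add_zero])
  have hminus := norm_tensorBilin_self_le hM (hη.sub hτ) (by rw [trace_sub, hη₀, hτ₀, sub_zero])
  calc ‖tensorBilin S η τ‖
      = ‖tensorBilin S (η + τ) (η + τ) - tensorBilin S (η - τ) (η - τ)‖ / 4 := by
        rw [← hpolar, norm_mul]; norm_num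
    _ ≤ (‖tensorBilin S (η + τ) (η + τ)‖ + ‖tensorBilin S (η - τ) (η - τ)‖) / 4 := by
        gcongr; exact norm_sub_le _ _
    _ ≤ (M * ((η + τ) * (η + τ)).trace.re + M * ((η - τ) * (η - τ)).trace.re) / 4 := by
        gcongr
    _ = M / 2 * ((η * η).trace.re + (τ * τ).trace.re) := by
        rw [← mul_add, hparallelogram]; ring

theorem norm_tensorBilin_le (hsym : ∀ i j k l, S i j k l = S k l i j)
    (hM : ∀ η : Matrix ι ι ℂ, η.IsHermitian → η.trace = 0 → (η * η).trace.re = 1 →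
      ‖tensorBilin S η η‖ ≤ M)
    {X Y : Matrix ι ι ℂ} (hX : X.trace = 0) (hY : Y.trace = 0) :
    ‖tensorBilin S X Y‖ ≤ M * ((Xᴴ * X).trace.re + (Yᴴ * Y).trace.re) := by
  obtain ⟨P, R, hP, hR, hP₀, hR₀, rfl⟩ := exists_isHermitian_add_I_smul hX
  obtain ⟨P', R', hP', hR', hP'₀, hR'₀, rfl⟩ := exists_isHermitian_add_I_smul hY
  have hexpand : tensorBilin S (P + Complex.I • R) (P' + Complex.I • R') =
      tensorBilin S P P' + Complex.I * tensorBilin S P R' + Complex.I * tensorBilin S R P' -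
        tensorBilin S R R' := by
    simp only [map_add, map_smul, LinearMap.add_apply, LinearMap.smul_apply, smul_eq_mul]
    linear_combination (tensorBilin S R R') * Complex.I_sq
  have h₁ := norm_tensorBilin_le_of_isHermitian hsym hM hP hP' hP₀ hP'₀
  have h₂ := norm_tensorBilin_le_of_isHermitian hsym hM hP hR' hP₀ hR'₀
  have h₃ := norm_tensorBilin_le_of_isHermitian hsym hM hR hP' hR₀ hP'₀
  have h₄ := norm_tensorBilin_le_of_isHermitian hsym hM hR hR' hR₀ hR'₀
  rw [hexpand, trace_conjTranspose_mul_self_add_I_smul hP hR,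
    trace_conjTranspose_mul_self_add_I_smul hP' hR', Complex.add_re, Complex.add_re]
  calc _ ≤ ‖tensorBilin S P P'‖ + ‖Complex.I * tensorBilin S P R'‖ +
        ‖Complex.I * tensorBilin S R P'‖ + ‖tensorBilin S R R'‖ :=
        norm_sub_le_of_le norm_add₃_le le_rfl
    _ ≤ _ := by
      simp only [norm_mul, Complex.norm_I, one_mul]
      linarith

theorem norm_le_two_mul_of_norm_tensorBilin_self_le [DecidableEq ι]
    (hsym : ∀ i j k l, S i j k l = S k l i j) (htr : ∀ c d, ∑ a, S a a c d = 0)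
    (hM : ∀ η : Matrix ι ι ℂ, η.IsHermitian → η.trace = 0 → (η * η).trace.re = 1 →
      ‖tensorBilin S η η‖ ≤ M)
    (hM₀ : 0 ≤ M) (i j k l : ι) : ‖S i j k l‖ ≤ 2 * M := by
  set E := single j i (1 : ℂ)
  set F := single l k (1 : ℂ)
  set X := E - (E.trace / Fintype.card ι) • 1
  set Y := F - (F.trace / Fintype.card ι) • 1
  have hXY : S i j k l = tensorBilin S X Y := by
    rw [tensorBilin_sub_smul_one S hsym htr, tensorBilin_single_single]
  have hX : (Xᴴ * X).trace.re ≤ 1 :=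
    (re_trace_conjTranspose_mul_self_sub_trace_div_card_smul_one_le E).trans_eq <| by
      rw [trace_conjTranspose_single_mul_single, Complex.one_re]
  have hY : (Yᴴ * Y).trace.re ≤ 1 :=
    (re_trace_conjTranspose_mul_self_sub_trace_div_card_smul_one_le F).trans_eq <| by
      rw [trace_conjTranspose_single_mul_single, Complex.one_re]
  calc ‖S i j k l‖ = ‖tensorBilin S X Y‖ := by rw [hXY]
    _ ≤ M * ((Xᴴ * X).trace.re + (Yᴴ * Y).trace.re) :=
        norm_tensorBilin_le hsym hM (trace_sub_trace_div_card_smul_one E)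
          (trace_sub_trace_div_card_smul_one F)
    _ ≤ M * (1 + 1) := by gcongr
    _ = 2 * M := by ring

end QuadraticBound

/-- Quantitative form of parts (2) and (3) of the proof of Theorem 1.2: there is a
dimensional constant `C n > 0` such that for every `n ≥ 2`, every component of a 4-index
tensor `S` on `ℂ^n` satisfying the pair symmetry, the reality condition and the trace-free
condition is bounded by `C n` times the supremum of `|S(η,η)|` over unit-norm trace-zero
Hermitian matrices `η`. -/
theorem tensor_bounded_by_quadratic_form :
    ∃ C : ℕ → ℝ, (∀ n, 0 < C n) ∧
      ∀ (n : ℕ), 2 ≤ n → ∀ S : Fin n → Fin n → Fin n → Fin n → ℂ,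
        (∀ i j k l, S i j k l = S k l i j) →
        (∀ i j k l, starRingEnd ℂ (S i j k l) = S j i l k) →
        (∀ c d : Fin n, ∑ a, S a a c d = 0) →
        ∀ i j k l : Fin n, ‖S i j k l‖ ≤ C n *
          sSup {x : ℝ | ∃ η : Matrix (Fin n) (Fin n) ℂ, η.IsHermitian ∧ η.trace = 0 ∧
            (Matrix.trace (η * η)).re = 1 ∧
            x = ‖∑ a, ∑ b, ∑ c, ∑ d, S a b c d * η b a * η d c‖} := by
  refine ⟨fun _ => 2, fun _ => two_pos, fun n _ S hsym _ htr i j k l => ?_⟩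
  apply norm_le_two_mul_of_norm_tensorBilin_self_le hsym htr
  · intro η hη hη₀ hη₁
    refine le_csSup ((bddAbove_norm_tensorBilin_self S).mono ?_) ⟨η, hη, hη₀, hη₁, rfl⟩
    rintro _ ⟨η, hη, -, hη₁, rfl⟩
    exact ⟨η, by rw [Set.mem_ofPred_eq, hη.eq, hη₁], rfl⟩
  · exact Real.sSup_nonneg <| by rintro _ ⟨η, -, -, -, rfl⟩; exact norm_nonneg _
end
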